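/- arXiv:1212.4002 — 13 statements merged into one kernel-verified Lean document; each statement's English description precedes it below -/
import Mathlib

section
/- For every integer n ≥ 1 and all α = (α_1, …, α_{n+1}) ∈ ℝ^{n+1}, β = (β_1, …, β_n) ∈ ℝ^n and t ∈ ℝ, one has r(t, α, β) ≥ 0. -/
/-!
With `a_k = t + α_k` and `b_l = -β_l`, `2 r(t, α, β)` is
`2 Σ_{k,l} |a_k - b_l| - Σ_{k,k'} |a_k - a_k'| - Σ_{l,l'} |b_l - b_l'|` (full double sums).
Since `|x - y| = ∫ |𝟙[s < x] - 𝟙[s < y]| ds`, this is the integral over `s` of the same quantity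
for the 0/1 vectors `𝟙[s < a_k]` and `𝟙[s < b_l]`. If `p` of the `n + 1` entries of the first and
`q` of the `n` entries of the second equal `1`, that quantity is `2 ((p - q)² - (p - q))`, which is
nonnegative because `p - q` is an integer.
-/

open Finset

/-- For `n ≥ 1`, `α = (α 1, …, α (n+1))`, `β = (β 1, …, β n)` and `t ∈ ℝ`,
`r(t, α, β) = Σ_{l=1}^{n} Σ_{k=1}^{n+1} |t + α_k + β_l|
  − Σ_{1 ≤ k < l ≤ n+1} |α_k − α_l| − Σ_{1 ≤ k < l ≤ n} |β_k − β_l|`. -/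
noncomputable def rfun (n : ℕ) (t : ℝ) (α β : ℕ → ℝ) : ℝ :=
  (∑ l ∈ Icc 1 n, ∑ k ∈ Icc 1 (n + 1), |t + α k + β l|)
    - (∑ k ∈ Icc 1 (n + 1), ∑ l ∈ Ioc k (n + 1), |α k - α l|)
    - (∑ k ∈ Icc 1 n, ∑ l ∈ Ioc k n, |β k - β l|)

open MeasureTheory

theorem sum_sum_eq_two_nsmul_sum_sum_lt {ι M : Type*} [LinearOrder ι] [AddCommMonoid M]
    (s : Finset ι) (f : ι → ι → M) (hsymm : ∀ i j, f i j = f j i) (hdiag : ∀ i, f i i = 0) :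
    ∑ i ∈ s, ∑ j ∈ s, f i j = 2 • ∑ i ∈ s, ∑ j ∈ s with i < j, f i j := by
  have hsplit (i : ι) (_ : i ∈ s) :
      ∑ j ∈ s, f i j = ∑ j ∈ s with i < j, f i j + ∑ j ∈ s with j < i, f i j := by
    rw [← sum_filter_add_sum_filter_not s (i < ·)]
    congr 1
    refine (sum_subset (fun j => by simp +contextual [le_of_lt]) fun j hj hj' => ?_).symm
    obtain rfl : j = i := by grind
    exact hdiag j
  have hswap : ∑ i ∈ s, ∑ j ∈ s with j < i, f i j = ∑ i ∈ s, ∑ j ∈ s with i < j, f i j := by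
    rw [sum_comm' (t' := s) (s' := fun j => s.filter (j < ·)) (by grind)]
    exact sum_congr rfl fun i _ => sum_congr rfl fun j _ => hsymm j i
  rw [sum_congr rfl hsplit, sum_add_distrib, hswap, two_nsmul]

theorem sum_Icc_sum_Icc_abs_sub (N : ℕ) (x : ℕ → ℝ) :
    ∑ k ∈ Icc 1 N, ∑ l ∈ Icc 1 N, |x k - x l| =
      2 * ∑ k ∈ Icc 1 N, ∑ l ∈ Ioc k N, |x k - x l| := by
  rw [sum_sum_eq_two_nsmul_sum_sum_lt _ _ (fun _ _ => abs_sub_comm _ _) (fun _ => by simp),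
    nsmul_eq_mul, Nat.cast_ofNat]
  refine congrArg _ (sum_congr rfl fun k hk => sum_congr ?_ fun _ _ => rfl)
  ext l
  simp only [mem_filter, mem_Icc, mem_Ioc] at hk ⊢
  omega

section

variable {ι κ : Type*}

theorem abs_indicator_Ioi_sub_indicator_Ioi (x y s : ℝ) :
    |(Set.Ioi s).indicator (1 : ℝ → ℝ) x - (Set.Ioi s).indicator 1 y| =
      (Set.Ico (min x y) (max x y)).indicator 1 s := by
  wlog h : x ≤ y generalizing x y
  · rw [abs_sub_comm, min_comm, max_comm]
    exact this y x (le_of_not_ge h)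
  rw [min_eq_left h, max_eq_right h]
  simp only [Set.indicator_apply, Set.mem_Ioi, Set.mem_Ico, Pi.one_apply]
  split_ifs <;> grind

theorem integrable_abs_indicator_Ioi_sub_indicator_Ioi (x y : ℝ) :
    Integrable fun s => |(Set.Ioi s).indicator (1 : ℝ → ℝ) x - (Set.Ioi s).indicator 1 y| := by
  simp only [abs_indicator_Ioi_sub_indicator_Ioi]
  exact (integrable_indicator_iff measurableSet_Ico).2
    (integrableOn_const (by simp [Real.volume_Ico]))

theorem integral_abs_indicator_Ioi_sub_indicator_Ioi (x y : ℝ) :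
    ∫ s, |(Set.Ioi s).indicator (1 : ℝ → ℝ) x - (Set.Ioi s).indicator 1 y| = |x - y| := by
  simp only [abs_indicator_Ioi_sub_indicator_Ioi]
  rw [integral_indicator_one measurableSet_Ico, measureReal_def, Real.volume_Ico,
    ENNReal.toReal_ofReal (sub_nonneg.2 min_le_max), max_sub_min_eq_abs, abs_sub_comm]

theorem integrable_sum_sum_abs_indicator_Ioi_sub (I : Finset ι) (J : Finset κ)
    (a : ι → ℝ) (b : κ → ℝ) :
    Integrable fun s =>
      ∑ i ∈ I, ∑ j ∈ J, |(Set.Ioi s).indicator (1 : ℝ → ℝ) (a i) - (Set.Ioi s).indicator 1 (b j)| :=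
  integrable_finsetSum _ fun _ _ => integrable_finsetSum _ fun _ _ =>
    integrable_abs_indicator_Ioi_sub_indicator_Ioi _ _

theorem sum_sum_abs_sub_eq_integral (I : Finset ι) (J : Finset κ) (a : ι → ℝ) (b : κ → ℝ) :
    ∑ i ∈ I, ∑ j ∈ J, |a i - b j| = ∫ s, ∑ i ∈ I, ∑ j ∈ J,
      |(Set.Ioi s).indicator (1 : ℝ → ℝ) (a i) - (Set.Ioi s).indicator 1 (b j)| := by
  rw [integral_finsetSum _ fun i _ => integrable_finsetSum _ fun j _ =>
    integrable_abs_indicator_Ioi_sub_indicator_Ioi _ _]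
  refine sum_congr rfl fun i _ => ?_
  rw [integral_finsetSum _ fun j _ => integrable_abs_indicator_Ioi_sub_indicator_Ioi _ _]
  exact sum_congr rfl fun j _ => (integral_abs_indicator_Ioi_sub_indicator_Ioi _ _).symm

theorem sum_sum_abs_sub_of_zero_or_one (I : Finset ι) (J : Finset κ) (u : ι → ℝ)
    (v : κ → ℝ) (hu : ∀ i, u i = 0 ∨ u i = 1) (hv : ∀ j, v j = 0 ∨ v j = 1) :
    ∑ i ∈ I, ∑ j ∈ J, |u i - v j| =
      #J * ∑ i ∈ I, u i + #I * ∑ j ∈ J, v j - 2 * (∑ i ∈ I, u i) * ∑ j ∈ J, v j := by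
  have h : ∀ i j, |u i - v j| = u i + v j - 2 * (u i * v j) := by
    intro i j
    rcases hu i with hi | hi <;> rcases hv j with hj | hj <;> norm_num [hi, hj]
  simp only [h, sum_add_distrib, sum_sub_distrib, sum_const, nsmul_eq_mul, ← mul_sum, ← sum_mul]
  ring

theorem sum_sum_abs_indicator_sub_add_le {α : Type*} (S : Set α) (K : Finset ι)
    (L : Finset κ) (hKL : #K = #L + 1) (a : ι → α) (b : κ → α) :
    ∑ k ∈ K, ∑ k' ∈ K, |S.indicator (1 : α → ℝ) (a k) - S.indicator 1 (a k')| +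
        ∑ l ∈ L, ∑ l' ∈ L, |S.indicator (1 : α → ℝ) (b l) - S.indicator 1 (b l')| ≤
      2 * ∑ k ∈ K, ∑ l ∈ L, |S.indicator (1 : α → ℝ) (a k) - S.indicator 1 (b l)| := by
  classical
  have h01 (x : α) : S.indicator (1 : α → ℝ) x = 0 ∨ S.indicator (1 : α → ℝ) x = 1 := by
    by_cases hx : x ∈ S <;> simp [hx]
  have hp : ∑ k ∈ K, S.indicator (1 : α → ℝ) (a k) = #{k ∈ K | a k ∈ S} := by
    simp [Set.indicator_apply]
  have hq : ∑ l ∈ L, S.indicator (1 : α → ℝ) (b l) = #{l ∈ L | b l ∈ S} := by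
    simp [Set.indicator_apply]
  rw [sum_sum_abs_sub_of_zero_or_one _ _ _ _ (fun _ => h01 _) (fun _ => h01 _),
    sum_sum_abs_sub_of_zero_or_one _ _ _ _ (fun _ => h01 _) (fun _ => h01 _),
    sum_sum_abs_sub_of_zero_or_one _ _ _ _ (fun _ => h01 _) (fun _ => h01 _), hp, hq, hKL]
  set p := #{k ∈ K | a k ∈ S}
  set q := #{l ∈ L | b l ∈ S}
  have hpq : (p - q : ℝ) ≤ (p - q) ^ 2 := by exact_mod_cast Int.le_self_sq (p - q)
  push_cast
  nlinarith [hpq]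

theorem sum_sum_abs_sub_add_le (K : Finset ι) (L : Finset κ) (hKL : #K = #L + 1)
    (a : ι → ℝ) (b : κ → ℝ) :
    ∑ k ∈ K, ∑ k' ∈ K, |a k - a k'| + ∑ l ∈ L, ∑ l' ∈ L, |b l - b l'| ≤
      2 * ∑ k ∈ K, ∑ l ∈ L, |a k - b l| := by
  rw [sum_sum_abs_sub_eq_integral, sum_sum_abs_sub_eq_integral, sum_sum_abs_sub_eq_integral,
    ← integral_add, ← integral_const_mul]
  · exact integral_mono
      ((integrable_sum_sum_abs_indicator_Ioi_sub _ _ _ _).add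
        (integrable_sum_sum_abs_indicator_Ioi_sub _ _ _ _))
      ((integrable_sum_sum_abs_indicator_Ioi_sub _ _ _ _).const_mul 2)
      fun s => sum_sum_abs_indicator_sub_add_le _ K L hKL a b
  all_goals exact integrable_sum_sum_abs_indicator_Ioi_sub _ _ _ _

end

theorem statement0_general (n : ℕ) (α β : ℕ → ℝ) (t : ℝ) :
    0 ≤ rfun n t α β := by
  have key := sum_sum_abs_sub_add_le (Icc 1 (n + 1)) (Icc 1 n) (by simp)
    (fun k => t + α k) (fun l => -β l)
  simp only [sub_neg_eq_add, add_sub_add_left_eq_sub, neg_add_eq_sub] at key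
  rw [sum_comm (s := Icc 1 n) (t := Icc 1 n), sum_comm (s := Icc 1 (n + 1)) (t := Icc 1 n),
    sum_Icc_sum_Icc_abs_sub, sum_Icc_sum_Icc_abs_sub] at key
  unfold rfun
  linarith

/-- For every integer `n ≥ 1` and all `α ∈ ℝ^{n+1}`, `β ∈ ℝ^n`, `t ∈ ℝ`, one has
`r(t, α, β) ≥ 0`. -/
theorem statement0 (n : ℕ) (hn : 1 ≤ n) (α β : ℕ → ℝ) (t : ℝ) :
    0 ≤ rfun n t α β :=
  statement0_general n α β t
end

section
/- Let n ≥ 1, α = (α_1, …, α_{n+1}) ∈ ℝ^{n+1} with α_1 ≥ α_2 ≥ … ≥ α_{n+1}, and β = (β_1, …, β_n) ∈ ℝ^n with β_1 ≥ β_2 ≥ … ≥ β_n. Then there exists t ∈ ℝ such that r(t, α, β) = 0 if and only if α_{n+1−k} + β_k ≥ α_{n+2−l} + β_l for all k, l ∈ {1, …, n}. -/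
/-!
Write `x_{kl} = t + α_k + β_l` and let `ε_{kl} = 1` if `k + l ≤ n + 1` and `-1` otherwise.
For antitone `α`, `β` the pairwise sums are linear, `Σ_{k<l} |α_k - α_l| = Σ_k (n + 2 - 2k) α_k`
and `Σ_{k<l} |β_k - β_l| = Σ_l (n + 1 - 2l) β_l`, and these are exactly the coefficients of
`Σ_{k,l} ε_{kl} x_{kl}`, in which `t` cancels. Hence `r = Σ_{k,l} (|x_{kl}| - ε_{kl} x_{kl})`
is a sum of nonnegative terms, and `r = 0` says that every `x_{kl}` has sign `ε_{kl}`. By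
monotonicity it suffices to check this next to the antidiagonal, `k = n + 1 - l` and
`k = n + 2 - l`, i.e. `α_{n+2-l} + β_l ≤ -t ≤ α_{n+1-l} + β_l` for all `l`, and such a `t`
exists iff every lower bound is below every upper bound.
-/

open Finset

theorem sum_Icc_sum_Ioc_sub (f : ℕ → ℝ) (m : ℕ) :
    ∑ k ∈ Icc 1 m, ∑ l ∈ Ioc k m, (f k - f l) = ∑ k ∈ Icc 1 m, ((m : ℝ) + 1 - 2 * k) * f k := by
  induction m with
  | zero => simp
  | succ m ih =>
    rw [sum_Icc_succ_top (by omega), sum_Icc_succ_top (by omega), Ioc_self, sum_empty,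
      add_zero]
    have hsplit : ∀ k ∈ Icc 1 m, ∑ l ∈ Ioc k (m + 1), (f k - f l)
        = ∑ l ∈ Ioc k m, (f k - f l) + (f k - f (m + 1)) := fun k hk =>
      sum_Ioc_succ_top (mem_Icc.mp hk).2 _
    rw [sum_congr rfl hsplit, sum_add_distrib, ih, sum_sub_distrib, sum_const, Nat.card_Icc,
      nsmul_eq_mul]
    simp only [Nat.cast_add, Nat.cast_one, add_tsub_cancel_right, add_mul, sub_mul,
      sum_add_distrib, sum_sub_distrib, one_mul]
    ring

theorem sum_Icc_one_add_sub_two_mul (m : ℕ) : ∑ k ∈ Icc 1 m, ((m : ℝ) + 1 - 2 * k) = 0 := by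
  simpa using (sum_Icc_sum_Ioc_sub (fun _ => 1) m).symm

theorem sum_Icc_sum_Ioc_abs_sub_of_antitoneOn {f : ℕ → ℝ} {m : ℕ}
    (hf : AntitoneOn f (Set.Icc 1 m)) :
    ∑ k ∈ Icc 1 m, ∑ l ∈ Ioc k m, |f k - f l| = ∑ k ∈ Icc 1 m, ((m : ℝ) + 1 - 2 * k) * f k := by
  rw [← sum_Icc_sum_Ioc_sub]
  refine sum_congr rfl fun k hk => sum_congr rfl fun l hl => abs_of_nonneg (sub_nonneg.2 ?_)
  simp only [mem_Icc, mem_Ioc] at hk hl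
  exact hf ⟨hk.1, by omega⟩ ⟨by omega, hl.2⟩ hl.1.le

theorem sum_Icc_ite_le (m c : ℕ) (hc : c ≤ m) :
    ∑ i ∈ Icc 1 m, (if i ≤ c then (1 : ℝ) else -1) = 2 * c - m := by
  rw [sum_ite, sum_const, sum_const, filter_not, card_sdiff_of_subset (filter_subset _ _)]
  have : (Icc 1 m).filter (· ≤ c) = Icc 1 c := by ext; simp only [mem_filter, mem_Icc]; omega
  simp only [this, Nat.card_Icc, add_tsub_cancel_right, nsmul_eq_mul]
  rw [Nat.cast_sub hc]
  ring

def antidiagSign (n k l : ℕ) : ℝ := if k + l ≤ n + 1 then 1 else -1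

theorem sum_antidiagSign_left {n k : ℕ} (hk : 1 ≤ k) (hk' : k ≤ n + 1) :
    ∑ l ∈ Icc 1 n, antidiagSign n k l = n + 2 - 2 * k := by
  unfold antidiagSign
  rw [sum_congr rfl fun l _ => if_congr (show k + l ≤ n + 1 ↔ l ≤ n + 1 - k by omega) rfl rfl,
    sum_Icc_ite_le n _ (by omega), Nat.cast_sub hk']
  push_cast
  ring

theorem sum_antidiagSign_right {n l : ℕ} (hl : l ≤ n) :
    ∑ k ∈ Icc 1 (n + 1), antidiagSign n k l = n + 1 - 2 * l := by
  unfold antidiagSign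
  rw [sum_congr rfl fun k _ => if_congr (show k + l ≤ n + 1 ↔ k ≤ n + 1 - l by omega) rfl rfl,
    sum_Icc_ite_le (n + 1) _ (by omega), Nat.cast_sub (by omega)]
  push_cast
  ring

theorem sum_sum_antidiagSign_mul (n : ℕ) (t : ℝ) (α β : ℕ → ℝ) :
    ∑ l ∈ Icc 1 n, ∑ k ∈ Icc 1 (n + 1), antidiagSign n k l * (t + α k + β l)
      = ∑ k ∈ Icc 1 (n + 1), ((n : ℝ) + 2 - 2 * k) * α k
        + ∑ l ∈ Icc 1 n, ((n : ℝ) + 1 - 2 * l) * β l := by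
  have hα : ∑ l ∈ Icc 1 n, ∑ k ∈ Icc 1 (n + 1), antidiagSign n k l * α k
      = ∑ k ∈ Icc 1 (n + 1), ((n : ℝ) + 2 - 2 * k) * α k := by
    rw [sum_comm]
    refine sum_congr rfl fun k hk => ?_
    rw [← sum_mul, sum_antidiagSign_left (mem_Icc.1 hk).1 (mem_Icc.1 hk).2]
  have hβ : ∀ l ∈ Icc 1 n, ∑ k ∈ Icc 1 (n + 1), antidiagSign n k l * (t + β l)
      = ((n : ℝ) + 1 - 2 * l) * t + ((n : ℝ) + 1 - 2 * l) * β l := fun l hl => by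
    rw [← sum_mul, sum_antidiagSign_right (mem_Icc.1 hl).2, mul_add]
  simp only [add_assoc, add_left_comm t, mul_add (antidiagSign _ _ _) (α _), sum_add_distrib]
  rw [hα, sum_congr rfl hβ, sum_add_distrib, ← sum_mul, sum_Icc_one_add_sub_two_mul, zero_mul,
    zero_add]

theorem rfun_eq_sum_sum_abs_sub_antidiagSign_mul {n : ℕ} {α β : ℕ → ℝ}
    (hα : AntitoneOn α (Set.Icc 1 (n + 1))) (hβ : AntitoneOn β (Set.Icc 1 n)) (t : ℝ) :
    rfun n t α β = ∑ l ∈ Icc 1 n, ∑ k ∈ Icc 1 (n + 1),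
      (|t + α k + β l| - antidiagSign n k l * (t + α k + β l)) := by
  simp only [sum_sub_distrib]
  rw [rfun, sum_Icc_sum_Ioc_abs_sub_of_antitoneOn hα, sum_Icc_sum_Ioc_abs_sub_of_antitoneOn hβ,
    sum_sum_antidiagSign_mul]
  simp only [Nat.cast_add_one, add_assoc, one_add_one_eq_two]
  ring

theorem abs_sub_antidiagSign_mul_nonneg (n k l : ℕ) (x : ℝ) :
    0 ≤ |x| - antidiagSign n k l * x := by
  unfold antidiagSign
  split_ifs
  · linarith [le_abs_self x]
  · linarith [neg_abs_le x]

theorem abs_sub_antidiagSign_mul_eq_zero_iff (n k l : ℕ) (x : ℝ) :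
    |x| - antidiagSign n k l * x = 0 ↔ if k + l ≤ n + 1 then 0 ≤ x else x ≤ 0 := by
  unfold antidiagSign
  split_ifs
  · rw [one_mul, sub_eq_zero, abs_eq_self]
  · rw [neg_one_mul, sub_neg_eq_add, add_eq_zero_iff_eq_neg, abs_eq_neg_self]

theorem rfun_eq_zero_iff {n : ℕ} {α β : ℕ → ℝ}
    (hα : AntitoneOn α (Set.Icc 1 (n + 1))) (hβ : AntitoneOn β (Set.Icc 1 n)) (t : ℝ) :
    rfun n t α β = 0 ↔ ∀ l ∈ Icc 1 n, ∀ k ∈ Icc 1 (n + 1),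
      if k + l ≤ n + 1 then 0 ≤ t + α k + β l else t + α k + β l ≤ 0 := by
  rw [rfun_eq_sum_sum_abs_sub_antidiagSign_mul hα hβ,
    sum_eq_zero_iff_of_nonneg fun l _ => sum_nonneg fun k _ => abs_sub_antidiagSign_mul_nonneg ..]
  refine forall₂_congr fun l _ => ?_
  rw [sum_eq_zero_iff_of_nonneg fun k _ => abs_sub_antidiagSign_mul_nonneg ..]
  exact forall₂_congr fun k _ => abs_sub_antidiagSign_mul_eq_zero_iff ..

theorem forall_antidiag_sign_conditions_iff {n : ℕ} {α : ℕ → ℝ}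
    (hα : AntitoneOn α (Set.Icc 1 (n + 1))) (β : ℕ → ℝ) (t : ℝ) :
    (∀ l ∈ Icc 1 n, ∀ k ∈ Icc 1 (n + 1),
      if k + l ≤ n + 1 then 0 ≤ t + α k + β l else t + α k + β l ≤ 0) ↔
      ∀ l ∈ Icc 1 n, α (n + 2 - l) + β l ≤ -t ∧ -t ≤ α (n + 1 - l) + β l := by
  refine forall₂_congr fun l hl => ?_
  rw [mem_Icc] at hl
  constructor
  · intro h
    have hpos := h (n + 1 - l) (mem_Icc.2 ⟨by omega, by omega⟩)
    have hneg := h (n + 2 - l) (mem_Icc.2 ⟨by omega, by omega⟩)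
    rw [if_pos (by omega)] at hpos
    rw [if_neg (by omega)] at hneg
    constructor <;> linarith
  · rintro ⟨hlow, hhigh⟩ k hk
    rw [mem_Icc] at hk
    split_ifs with hkl
    · have := hα ⟨hk.1, hk.2⟩ ⟨by omega, by omega⟩ (show k ≤ n + 1 - l by omega)
      linarith
    · have := hα ⟨by omega, by omega⟩ ⟨hk.1, hk.2⟩ (show n + 2 - l ≤ k by omega)
      linarith

theorem Finset.exists_forall_le_and_le_iff {ι β : Type*} [LinearOrder β] [Nonempty β]
    {s : Finset ι} {f g : ι → β} :
    (∃ c, ∀ i ∈ s, f i ≤ c ∧ c ≤ g i) ↔ ∀ i ∈ s, ∀ j ∈ s, f i ≤ g j := by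
  refine ⟨fun ⟨c, hc⟩ i hi j hj => (hc i hi).1.trans (hc j hj).2, fun h => ?_⟩
  rcases s.eq_empty_or_nonempty with rfl | hs
  · simp
  · exact ⟨s.sup' hs f, fun i hi => ⟨le_sup' f hi, sup'_le hs f fun j hj => h j hj i hi⟩⟩

theorem statement1_general (n : ℕ) (α β : ℕ → ℝ)
    (hα : ∀ k, 1 ≤ k → k ≤ n → α (k + 1) ≤ α k)
    (hβ : ∀ k, 1 ≤ k → k + 1 ≤ n → β (k + 1) ≤ β k) :
    (∃ t : ℝ, rfun n t α β = 0) ↔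
      (∀ k l, 1 ≤ k → k ≤ n → 1 ≤ l → l ≤ n →
        α (n + 2 - l) + β l ≤ α (n + 1 - k) + β k) := by
  have hα' : AntitoneOn α (Set.Icc 1 (n + 1)) :=
    antitoneOn_of_add_one_le Set.ordConnected_Icc fun k _ hk hk' =>
      hα k hk.1 (Nat.le_of_add_le_add_right hk'.2)
  have hβ' : AntitoneOn β (Set.Icc 1 n) :=
    antitoneOn_of_add_one_le Set.ordConnected_Icc fun k _ hk hk' => hβ k hk.1 hk'.2
  simp_rw [rfun_eq_zero_iff hα' hβ', forall_antidiag_sign_conditions_iff hα']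
  refine (neg_surjective.exists (p := fun c : ℝ =>
    ∀ l ∈ Icc 1 n, α (n + 2 - l) + β l ≤ c ∧ c ≤ α (n + 1 - l) + β l)).symm.trans
    (exists_forall_le_and_le_iff.trans ?_)
  simp only [mem_Icc]
  exact ⟨fun h k l hk hk' hl hl' => h l ⟨hl, hl'⟩ k ⟨hk, hk'⟩,
    fun h l hl k hk => h k l hk.1 hk.2 hl.1 hl.2⟩

/-- Let `n ≥ 1`, `α_1 ≥ … ≥ α_{n+1}`, `β_1 ≥ … ≥ β_n`.  There exists `t ∈ ℝ` with
`r(t, α, β) = 0` if and only if `α_{n+1−k} + β_k ≥ α_{n+2−l} + β_l` for all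
`k, l ∈ {1, …, n}`. -/
theorem statement1 (n : ℕ) (hn : 1 ≤ n) (α β : ℕ → ℝ)
    (hα : ∀ k, 1 ≤ k → k ≤ n → α (k + 1) ≤ α k)
    (hβ : ∀ k, 1 ≤ k → k + 1 ≤ n → β (k + 1) ≤ β k) :
    (∃ t : ℝ, rfun n t α β = 0) ↔
      (∀ k l, 1 ≤ k → k ≤ n → 1 ≤ l → l ≤ n →
        α (n + 2 - l) + β l ≤ α (n + 1 - k) + β k) :=
  statement1_general n α β hα hβ
end

section
/- Let n ≥ 1, α = (α_1, …, α_{n+1}) ∈ ℝ^{n+1} with α_1 ≥ α_2 ≥ … ≥ α_{n+1}, β = (β_1, …, β_n) ∈ ℝ^n with β_1 ≥ β_2 ≥ … ≥ β_n, and suppose t ∈ ℝ satisfies the interlacing condition. Then Π over pairs (k,l) with 1 ≤ k ≤ n+1, 1 ≤ l ≤ n and k + l ≤ n of (1 + |t + α_k + β_l|) is ≥ μ(β), and likewise Π over pairs (k,l) with 1 ≤ k ≤ n+1, 1 ≤ l ≤ n and k + l ≥ n + 3 of (1 + |t + α_k + β_l|) is ≥ μ(β). -/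
/-! Write `μ(β)` as a product over pairs `k < l` in `[1, n]`. By the interlacing condition,
`t + α_{n+1-l} + β_l ≥ 0` and `t + α_{n+2-k} + β_k ≤ 0`, so for `k < l` the factor
`1 + |β_k - β_l|` is dominated by `1 + |t + α_{n+1-l} + β_k|` and by
`1 + |t + α_{n+2-k} + β_l|`. The substitutions `(k, l) ↦ (n+1-l, k)` and `(k, l) ↦ (n+2-k, l)`
are bijections from these pairs onto the index sets `k + l ≤ n` and `k + l ≥ n + 3`. -/

open Finset

/-- `μ(β) = Π_{1 ≤ k < l ≤ n} (1 + |β_k − β_l|)`. -/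
noncomputable def mufun (n : ℕ) (β : ℕ → ℝ) : ℝ :=
  ∏ k ∈ Icc 1 n, ∏ l ∈ Ioc k n, (1 + |β k - β l|)

lemma abs_sub_le_abs_add_left_of_nonneg {a b c : ℝ} (hba : b ≤ a) (hc : 0 ≤ c + b) :
    |a - b| ≤ |c + a| := by
  rw [abs_of_nonneg (by linarith), abs_of_nonneg (by linarith)]
  linarith

lemma abs_sub_le_abs_add_right_of_nonpos {a b c : ℝ} (hba : b ≤ a) (hc : c + a ≤ 0) :
    |a - b| ≤ |c + b| := by
  rw [abs_of_nonneg (by linarith), abs_of_nonpos (by linarith)]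
  linarith

section Reindex

variable {M : Type*} [CommMonoid M] (n : ℕ) (f : ℕ → ℕ → M)

lemma mem_sigma_Icc_Ioc {p : (_ : ℕ) × ℕ} :
    p ∈ (Icc 1 n).sigma (fun k => Ioc k n) ↔ 1 ≤ p.1 ∧ p.1 < p.2 ∧ p.2 ≤ n := by
  simp only [mem_sigma, mem_Icc, mem_Ioc]
  omega

lemma prod_filter_add_le_eq_prod_sigma :
    ∏ p ∈ (Icc 1 (n + 1) ×ˢ Icc 1 n).filter (fun p => p.1 + p.2 ≤ n), f p.1 p.2 =
      ∏ p ∈ (Icc 1 n).sigma (fun k => Ioc k n), f (n + 1 - p.2) p.1 := by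
  symm
  apply prod_nbij' (fun p => (n + 1 - p.2, p.1)) (fun q => ⟨q.2, n + 1 - q.1⟩)
  · intro p hp
    rw [mem_sigma_Icc_Ioc] at hp
    simp only [mem_filter, mem_product, mem_Icc]
    omega
  · intro q hq
    simp only [mem_filter, mem_product, mem_Icc] at hq
    simp only [mem_sigma_Icc_Ioc]
    omega
  · intro p hp
    rw [mem_sigma_Icc_Ioc] at hp
    simp only [Sigma.ext_iff, heq_eq_eq, true_and]
    omega
  · intro q hq
    simp only [mem_filter, mem_product, mem_Icc] at hq
    simp only [Prod.ext_iff, and_true]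
    omega
  · intro p _
    rfl

lemma prod_filter_le_add_eq_prod_sigma :
    ∏ p ∈ (Icc 1 (n + 1) ×ˢ Icc 1 n).filter (fun p => n + 3 ≤ p.1 + p.2), f p.1 p.2 =
      ∏ p ∈ (Icc 1 n).sigma (fun k => Ioc k n), f (n + 2 - p.1) p.2 := by
  symm
  apply prod_nbij' (fun p => (n + 2 - p.1, p.2)) (fun q => ⟨n + 2 - q.1, q.2⟩)
  · intro p hp
    rw [mem_sigma_Icc_Ioc] at hp
    simp only [mem_filter, mem_product, mem_Icc]
    omega
  · intro q hq
    simp only [mem_filter, mem_product, mem_Icc] at hq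
    simp only [mem_sigma_Icc_Ioc]
    omega
  · intro p hp
    rw [mem_sigma_Icc_Ioc] at hp
    simp only [Sigma.ext_iff, heq_eq_eq, and_true]
    omega
  · intro q hq
    simp only [mem_filter, mem_product, mem_Icc] at hq
    simp only [Prod.ext_iff, and_true]
    omega
  · intro p _
    rfl

end Reindex

lemma mufun_eq_prod_sigma (n : ℕ) (β : ℕ → ℝ) :
    mufun n β = ∏ p ∈ (Icc 1 n).sigma (fun k => Ioc k n), (1 + |β p.1 - β p.2|) :=
  prod_sigma' _ _ _

lemma mufun_le_prod_sigma_of_abs_le {n : ℕ} {β : ℕ → ℝ} (g : ℕ → ℕ → ℝ)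
    (hg : ∀ k l, 1 ≤ k → k < l → l ≤ n → |β k - β l| ≤ |g k l|) :
    mufun n β ≤ ∏ p ∈ (Icc 1 n).sigma (fun k => Ioc k n), (1 + |g p.1 p.2|) := by
  rw [mufun_eq_prod_sigma]
  refine prod_le_prod (fun p _ => by positivity) fun p hp => ?_
  rw [mem_sigma_Icc_Ioc] at hp
  linarith [hg p.1 p.2 hp.1 hp.2.1 hp.2.2]

theorem statement3_general (n : ℕ) (α β : ℕ → ℝ)
    (hβ : ∀ k, 1 ≤ k → k + 1 ≤ n → β (k + 1) ≤ β k)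
    (t : ℝ)
    (ht : ∀ j, 1 ≤ j → j ≤ n →
      β j + t ≤ -α (n + 2 - j) ∧ -α (n + 1 - j) ≤ β j + t) :
    mufun n β ≤
      (∏ p ∈ (Icc 1 (n + 1) ×ˢ Icc 1 n).filter (fun p => p.1 + p.2 ≤ n),
        (1 + |t + α p.1 + β p.2|)) ∧
    mufun n β ≤
      (∏ p ∈ (Icc 1 (n + 1) ×ˢ Icc 1 n).filter (fun p => n + 3 ≤ p.1 + p.2),
        (1 + |t + α p.1 + β p.2|)) := by
  have hβ_anti : AntitoneOn β (Set.Icc 1 n) :=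
    antitoneOn_of_add_one_le Set.ordConnected_Icc fun k _ hk hk' => hβ k hk.1 hk'.2
  have hβkl : ∀ k l, 1 ≤ k → k < l → l ≤ n → β l ≤ β k := fun k l hk hkl hl =>
    hβ_anti ⟨hk, by omega⟩ ⟨by omega, hl⟩ hkl.le
  rw [prod_filter_add_le_eq_prod_sigma n (fun k l => 1 + |t + α k + β l|),
    prod_filter_le_add_eq_prod_sigma n (fun k l => 1 + |t + α k + β l|)]
  constructor
  · refine mufun_le_prod_sigma_of_abs_le (fun k l => t + α (n + 1 - l) + β k)
      fun k l hk hkl hl => ?_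
    refine abs_sub_le_abs_add_left_of_nonneg (hβkl k l hk hkl hl) ?_
    linarith [(ht l (by omega) hl).2]
  · refine mufun_le_prod_sigma_of_abs_le (fun k l => t + α (n + 2 - k) + β l)
      fun k l hk hkl hl => ?_
    refine abs_sub_le_abs_add_right_of_nonpos (hβkl k l hk hkl hl) ?_
    linarith [(ht k hk (by omega)).1]

/-- Let `n ≥ 1`, `α_1 ≥ … ≥ α_{n+1}`, `β_1 ≥ … ≥ β_n`, and suppose `t` satisfies
the interlacing condition `−α_{n+2−j} ≥ β_j + t ≥ −α_{n+1−j}` for `1 ≤ j ≤ n`.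
Then the product of `1 + |t + α_k + β_l|` over pairs `(k, l)` with
`1 ≤ k ≤ n+1`, `1 ≤ l ≤ n`, `k + l ≤ n` is `≥ μ(β)`, and likewise the product
over pairs with `k + l ≥ n + 3` is `≥ μ(β)`. -/
theorem statement3 (n : ℕ) (hn : 1 ≤ n) (α β : ℕ → ℝ)
    (hα : ∀ k, 1 ≤ k → k ≤ n → α (k + 1) ≤ α k)
    (hβ : ∀ k, 1 ≤ k → k + 1 ≤ n → β (k + 1) ≤ β k)
    (t : ℝ)
    (ht : ∀ j, 1 ≤ j → j ≤ n →
      β j + t ≤ -α (n + 2 - j) ∧ -α (n + 1 - j) ≤ β j + t) :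
    mufun n β ≤
      (∏ p ∈ (Icc 1 (n + 1) ×ˢ Icc 1 n).filter (fun p => p.1 + p.2 ≤ n),
        (1 + |t + α p.1 + β p.2|)) ∧
    mufun n β ≤
      (∏ p ∈ (Icc 1 (n + 1) ×ˢ Icc 1 n).filter (fun p => n + 3 ≤ p.1 + p.2),
        (1 + |t + α p.1 + β p.2|)) :=
  statement3_general n α β hβ t ht
end

section
/- For all real numbers a, b and all X ≥ 0, ∫_{−X}^{X} (1 + |t + a|)^{−1/2} (1 + |t + b|)^{−1/2} dt ≤ log(1 + |a| + X) + log(1 + |b| + X). -/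
/-!
By AM–GM the integrand is at most `((1 + |t + a|)⁻¹ + (1 + |t + b|)⁻¹) / 2`. After the shift
`u = t + c`, the interval `[-X, X]` lies inside `[-(|c| + X), |c| + X]`, over which
`(1 + |u|)⁻¹` integrates to exactly `2 log (1 + |c| + X)`.
-/

open MeasureTheory

lemma rpow_neg_half_mul_rpow_neg_half_le {x y : ℝ} (hx : 0 ≤ x) (hy : 0 ≤ y) :
    x ^ (-(1 : ℝ) / 2) * y ^ (-(1 : ℝ) / 2) ≤ (x⁻¹ + y⁻¹) / 2 := by
  have key := Real.geom_mean_le_arith_mean2_weighted (by norm_num : (0 : ℝ) ≤ 1 / 2)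
    (by norm_num : (0 : ℝ) ≤ 1 / 2) (inv_nonneg.2 hx) (inv_nonneg.2 hy) (by norm_num)
  rw [Real.inv_rpow hx, Real.inv_rpow hy, ← Real.rpow_neg hx, ← Real.rpow_neg hy] at key
  rw [neg_div]
  linarith

lemma continuous_inv_one_add_abs : Continuous fun u : ℝ => (1 + |u|)⁻¹ :=
  (continuous_const.add continuous_abs).inv₀ fun u => (by positivity : (0 : ℝ) < 1 + |u|).ne'

lemma integral_inv_one_add_abs_of_nonneg {M : ℝ} (hM : 0 ≤ M) :
    ∫ u in (0 : ℝ)..M, (1 + |u|)⁻¹ = Real.log (1 + M) := by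
  calc ∫ u in (0 : ℝ)..M, (1 + |u|)⁻¹ = ∫ u in (0 : ℝ)..M, (1 + u)⁻¹ := by
        refine intervalIntegral.integral_congr fun u hu => ?_
        rw [Set.uIcc_of_le hM] at hu
        simp only [abs_of_nonneg hu.1]
    _ = ∫ v in (1 + 0 : ℝ)..(1 + M), v⁻¹ := intervalIntegral.integral_comp_add_left _ 1
    _ = Real.log (1 + M) := by
        rw [integral_inv_of_pos (by norm_num) (by linarith)]
        norm_num

lemma integral_inv_one_add_abs_symm {M : ℝ} (hM : 0 ≤ M) :
    ∫ u in (-M)..M, (1 + |u|)⁻¹ = 2 * Real.log (1 + M) := by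
  have hreflect : ∫ u in (-M)..0, (1 + |u|)⁻¹ = ∫ u in (0 : ℝ)..M, (1 + |u|)⁻¹ := by
    simpa only [abs_neg, neg_zero] using
      (intervalIntegral.integral_comp_neg (a := 0) (b := M) fun u : ℝ => (1 + |u|)⁻¹).symm
  rw [← intervalIntegral.integral_add_adjacent_intervals
    (continuous_inv_one_add_abs.intervalIntegrable _ _)
    (continuous_inv_one_add_abs.intervalIntegrable _ _), hreflect,
    integral_inv_one_add_abs_of_nonneg hM]
  ring

lemma setIntegral_Icc_inv_one_add_abs_add_le (c : ℝ) {X : ℝ} (hX : 0 ≤ X) :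
    ∫ t in Set.Icc (-X) X, (1 + |t + c|)⁻¹ ≤ 2 * Real.log (1 + |c| + X) := by
  have hc := neg_abs_le c
  have hc' := le_abs_self c
  calc ∫ t in Set.Icc (-X) X, (1 + |t + c|)⁻¹
      = ∫ u in (-X + c)..(X + c), (1 + |u|)⁻¹ := by
        rw [integral_Icc_eq_integral_Ioc, ← intervalIntegral.integral_of_le (by linarith),
          intervalIntegral.integral_comp_add_right (fun u : ℝ => (1 + |u|)⁻¹) c]
    _ ≤ ∫ u in (-(|c| + X))..(|c| + X), (1 + |u|)⁻¹ :=
        intervalIntegral.integral_mono_interval (by linarith) (by linarith) (by linarith)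
          (Filter.Eventually.of_forall fun u => by positivity)
          (continuous_inv_one_add_abs.intervalIntegrable _ _)
    _ = 2 * Real.log (1 + |c| + X) := by
        rw [integral_inv_one_add_abs_symm (by positivity), add_assoc]

lemma integrableOn_Icc_inv_one_add_abs_add (c X : ℝ) :
    IntegrableOn (fun t => (1 + |t + c|)⁻¹) (Set.Icc (-X) X) :=
  (continuous_inv_one_add_abs.comp (continuous_add_const c)).integrableOn_Icc

/-- For all `a, b ∈ ℝ` and `X ≥ 0`,
`∫_{−X}^{X} (1 + |t + a|)^{−1/2} (1 + |t + b|)^{−1/2} dt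
  ≤ log(1 + |a| + X) + log(1 + |b| + X)`. -/
theorem statement6 (a b X : ℝ) (hX : 0 ≤ X) :
    ∫ t in Set.Icc (-X) X,
        (1 + |t + a|) ^ (-(1 : ℝ) / 2) * (1 + |t + b|) ^ (-(1 : ℝ) / 2)
      ≤ Real.log (1 + |a| + X) + Real.log (1 + |b| + X) := by
  have hcont (c : ℝ) : Continuous fun t : ℝ => (1 + |t + c|) ^ (-(1 : ℝ) / 2) :=
    (continuous_const.add (continuous_add_const c).abs).rpow_const fun t =>
      Or.inl (by positivity : (0 : ℝ) < 1 + |t + c|).ne'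
  have hA := integrableOn_Icc_inv_one_add_abs_add a X
  have hB := integrableOn_Icc_inv_one_add_abs_add b X
  calc ∫ t in Set.Icc (-X) X, (1 + |t + a|) ^ (-(1 : ℝ) / 2) * (1 + |t + b|) ^ (-(1 : ℝ) / 2)
      ≤ ∫ t in Set.Icc (-X) X, ((1 + |t + a|)⁻¹ + (1 + |t + b|)⁻¹) / 2 :=
        setIntegral_mono_on ((hcont a).mul (hcont b)).integrableOn_Icc
          ((hA.add hB).div_const 2) measurableSet_Icc fun t _ =>
            rpow_neg_half_mul_rpow_neg_half_le (by positivity) (by positivity)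
    _ = ((∫ t in Set.Icc (-X) X, (1 + |t + a|)⁻¹)
          + ∫ t in Set.Icc (-X) X, (1 + |t + b|)⁻¹) / 2 := by
        rw [integral_div, integral_add hA hB]
    _ ≤ Real.log (1 + |a| + X) + Real.log (1 + |b| + X) := by
        linarith [setIntegral_Icc_inv_one_add_abs_add_le a hX,
          setIntegral_Icc_inv_one_add_abs_add_le b hX]
end

section
/- With P, Q as defined, one has Q = P; that is, a point x ∈ ℝ^{n−1} satisfies y_{j+1} + ⋯ + y_{k−1} ≤ x_j + ⋯ + x_{k−1} ≤ y_j + ⋯ + y_k for all 1 ≤ j < k ≤ n if and only if x = w + Σ_{m=1}^{n} t_m y_m v_m for some t_1, …, t_n ∈ [0, 1]. -/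
open Finset

/-- The `m`-th coordinate (1-based, for `1 ≤ m ≤ n−1`) of a vector `x ∈ ℝ^{n−1}`. -/
noncomputable def coord (n : ℕ) (x : Fin (n - 1) → ℝ) (m : ℕ) : ℝ :=
  if h : 1 ≤ m ∧ m ≤ n - 1 then x ⟨m - 1, by omega⟩ else 0

/-- The vectors `v_1 = e_1`, `v_m = e_m − e_{m−1}` for `2 ≤ m ≤ n−1`, `v_n = −e_{n−1}`
in `ℝ^{n−1}` (coordinates indexed by `Fin (n−1)`, so `e_m` has `1` in slot `m−1`). -/
def stdV (n : ℕ) (m : ℕ) : Fin (n - 1) → ℝ := fun i =>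
  (if (i : ℕ) + 1 = m then (1 : ℝ) else 0) - (if (i : ℕ) + 2 = m then (1 : ℝ) else 0)

/-- The vector `w = y_2 e_1 + y_3 e_2 + ⋯ + y_n e_{n−1}`. -/
def wVec (n : ℕ) (y : ℕ → ℝ) : Fin (n - 1) → ℝ := fun i => y ((i : ℕ) + 2)

/-- The polytope `P ⊆ ℝ^{n−1}`: the set of `x` such that
`y_{j+1} + ⋯ + y_{k−1} ≤ x_j + ⋯ + x_{k−1} ≤ y_j + ⋯ + y_k` for all `1 ≤ j < k ≤ n`. -/
noncomputable def polyP (n : ℕ) (y : ℕ → ℝ) : Set (Fin (n - 1) → ℝ) :=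
  { x | ∀ j k : ℕ, 1 ≤ j → j < k → k ≤ n →
      (∑ m ∈ Icc (j + 1) (k - 1), y m) ≤ (∑ m ∈ Icc j (k - 1), coord n x m) ∧
      (∑ m ∈ Icc j (k - 1), coord n x m) ≤ (∑ m ∈ Icc j k, y m) }

/-- The zonotope `Q = { w + Σ_{m=1}^{n} t_m y_m v_m : 0 ≤ t_m ≤ 1 }`. -/
def polyQ (n : ℕ) (y : ℕ → ℝ) : Set (Fin (n - 1) → ℝ) :=
  { x | ∃ t : ℕ → ℝ, (∀ m, 0 ≤ t m ∧ t m ≤ 1) ∧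
      x = wVec n y + ∑ m ∈ Icc 1 n, (t m * y m) • stdV n m }

/-- The parallelohedron `Q_j = { w + Σ_{m ≠ j} t_m y_m v_m : 0 ≤ t_m ≤ 1 }`. -/
def polyQj (n : ℕ) (y : ℕ → ℝ) (j : ℕ) : Set (Fin (n - 1) → ℝ) :=
  { x | ∃ t : ℕ → ℝ, (∀ m, 0 ≤ t m ∧ t m ≤ 1) ∧
      x = wVec n y + ∑ m ∈ (Icc 1 n).erase j, (t m * y m) • stdV n m }

namespace Stmt9

/-- Partial sum of coordinates: `A k = x_1 + ⋯ + x_{k-1}`. -/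
noncomputable def A (n : ℕ) (x : Fin (n - 1) → ℝ) (k : ℕ) : ℝ :=
  ∑ m ∈ Ioc 0 (k - 1), coord n x m

/-- `aa k = A k − (y_2 + ⋯ + y_k)`. -/
noncomputable def aa (n : ℕ) (y : ℕ → ℝ) (x : Fin (n - 1) → ℝ) (k : ℕ) : ℝ :=
  A n x k - ∑ m ∈ Ioc 1 k, y m

lemma coordSum (n : ℕ) (x : Fin (n - 1) → ℝ) {j k : ℕ} (hj : 1 ≤ j) (hjk : j ≤ k) :
    ∑ m ∈ Icc j (k - 1), coord n x m = A n x k - A n x j := by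
  have h1 : Icc j (k - 1) = Ioc (j - 1) (k - 1) := by
    rw [show j = (j - 1) + 1 by omega, Finset.Icc_add_one_left_eq_Ioc, Nat.add_sub_cancel]
  rw [h1, A, A, eq_sub_iff_add_eq, add_comm]
  exact Finset.sum_Ioc_consecutive _ (by omega) (by omega)

lemma memP_iff (n : ℕ) (y : ℕ → ℝ) (x : Fin (n - 1) → ℝ) :
    x ∈ polyP n y ↔ ∀ j k : ℕ, 1 ≤ j → j < k → k ≤ n →
      aa n y x j ≤ aa n y x k + y k ∧ aa n y x k ≤ aa n y x j + y j := by
  unfold polyP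
  simp only [Set.mem_setOf_eq]
  refine forall_congr' fun j => forall_congr' fun k => ?_
  refine imp_congr_right fun hj => imp_congr_right fun hjk => imp_congr_right fun hk => ?_
  have e0 := coordSum n x hj hjk.le
  have e1 : ∑ m ∈ Ioc 1 j, y m + ∑ m ∈ Ioc j k, y m = ∑ m ∈ Ioc 1 k, y m :=
    Finset.sum_Ioc_consecutive _ hj hjk.le
  have e2 : ∑ m ∈ Ioc j k, y m = ∑ m ∈ Ioc j (k - 1), y m + y k := by
    rw [show k = (k - 1) + 1 by omega]
    rw [Finset.sum_Ioc_succ_top (by omega), Nat.add_sub_cancel]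
  have e3 : Icc (j + 1) (k - 1) = Ioc j (k - 1) := Finset.Icc_add_one_left_eq_Ioc _ _
  have e4 : Icc j k = Ioc (j - 1) k := by
    rw [show j = (j - 1) + 1 by omega, Finset.Icc_add_one_left_eq_Ioc, Nat.add_sub_cancel]
  have e5 : ∑ m ∈ Ioc (j - 1) k, y m = y j + ∑ m ∈ Ioc j k, y m := by
    have h6 : ∑ m ∈ Ioc (j - 1) j, y m + ∑ m ∈ Ioc j k, y m = ∑ m ∈ Ioc (j - 1) k, y m :=
      Finset.sum_Ioc_consecutive _ (by omega) hjk.le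
    have h7 : ∑ m ∈ Ioc (j - 1) j, y m = y j := by
      rw [show j = (j - 1) + 1 by omega, Nat.add_sub_cancel, Finset.sum_Ioc_succ_top le_rfl,
        Finset.Ioc_self, Finset.sum_empty, zero_add]
    linarith
  rw [e0, e3, e4, e5]
  unfold aa
  constructor
  · rintro ⟨h1, h2⟩
    constructor <;> linarith
  · rintro ⟨h1, h2⟩
    constructor <;> linarith

lemma qCoord (n : ℕ) (hn : 2 ≤ n) (y : ℕ → ℝ) (t : ℕ → ℝ) (i : Fin (n - 1)) :
    (wVec n y + ∑ m ∈ Icc 1 n, (t m * y m) • stdV n m) i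
      = y ((i : ℕ) + 2) + t ((i : ℕ) + 1) * y ((i : ℕ) + 1)
        - t ((i : ℕ) + 2) * y ((i : ℕ) + 2) := by
  have hi := i.isLt
  have hmem1 : (i : ℕ) + 1 ∈ Icc 1 n := by rw [Finset.mem_Icc]; omega
  have hmem2 : (i : ℕ) + 2 ∈ Icc 1 n := by rw [Finset.mem_Icc]; omega
  have : (∑ m ∈ Icc 1 n, (t m * y m) • stdV n m) i
      = ∑ m ∈ Icc 1 n, ((if (i : ℕ) + 1 = m then t m * y m else 0)
        - (if (i : ℕ) + 2 = m then t m * y m else 0)) := by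
    rw [Finset.sum_apply]
    refine Finset.sum_congr rfl fun m _ => ?_
    simp only [Pi.smul_apply, stdV, smul_eq_mul, mul_sub, mul_ite, mul_one, mul_zero]
  rw [Pi.add_apply, this, Finset.sum_sub_distrib,
    Finset.sum_ite_eq _ _ (fun m => t m * y m), Finset.sum_ite_eq _ _ (fun m => t m * y m),
    if_pos hmem1, if_pos hmem2]
  simp [wVec]
  ring

lemma coordQ (n : ℕ) (hn : 2 ≤ n) (y : ℕ → ℝ) (t : ℕ → ℝ) (x : Fin (n - 1) → ℝ)
    (hx : x = wVec n y + ∑ m ∈ Icc 1 n, (t m * y m) • stdV n m)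
    {m : ℕ} (h1 : 1 ≤ m) (h2 : m ≤ n - 1) :
    coord n x m = y (m + 1) + t m * y m - t (m + 1) * y (m + 1) := by
  rw [coord, dif_pos ⟨h1, h2⟩, hx, qCoord n hn y t,
    show (m - 1) + 1 = m by omega, show (m - 1) + 2 = m + 1 by omega]

lemma qA (n : ℕ) (hn : 2 ≤ n) (y : ℕ → ℝ) (t : ℕ → ℝ) (x : Fin (n - 1) → ℝ)
    (hx : x = wVec n y + ∑ m ∈ Icc 1 n, (t m * y m) • stdV n m) :
    ∀ k : ℕ, 1 ≤ k → k ≤ n → aa n y x k = t 1 * y 1 - t k * y k := by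
  intro k hk
  induction k, hk using Nat.le_induction with
  | base =>
    intro _
    unfold aa A
    simp
  | succ k hk ih =>
    intro hkn
    have ihv := ih (by omega)
    have hA : A n x (k + 1) = A n x k + coord n x k := by
      unfold A
      rw [show (k + 1) - 1 = k by omega, show k = (k - 1) + 1 by omega,
        Finset.sum_Ioc_succ_top (by omega)]
      rw [show (k - 1) + 1 = k by omega]
    have hY : ∑ m ∈ Ioc 1 (k + 1), y m = ∑ m ∈ Ioc 1 k, y m + y (k + 1) :=
      Finset.sum_Ioc_succ_top (by omega) _
    have hc : coord n x k = y (k + 1) + t k * y k - t (k + 1) * y (k + 1) :=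
      coordQ n hn y t x hx hk (by omega)
    unfold aa at ihv ⊢
    rw [hA, hY, hc]
    linarith

end Stmt9


/-- `Q = P`: a point `x ∈ ℝ^{n−1}` satisfies
`y_{j+1} + ⋯ + y_{k−1} ≤ x_j + ⋯ + x_{k−1} ≤ y_j + ⋯ + y_k` for all `1 ≤ j < k ≤ n`
iff `x = w + Σ_{m=1}^{n} t_m y_m v_m` for some `t_1, …, t_n ∈ [0,1]`. -/
theorem statement9 (n : ℕ) (hn : 2 ≤ n) (y : ℕ → ℝ)
    (hy : ∀ m, 1 ≤ m → m ≤ n → 0 < y m) :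
    polyQ n y = polyP n y := by
  ext x
  constructor
  · rintro ⟨t, ht, hx⟩
    rw [Stmt9.memP_iff]
    intro j k hj hjk hk
    have haj := Stmt9.qA n hn y t x hx j hj (by omega)
    have hak := Stmt9.qA n hn y t x hx k (by omega) hk
    have hyj := hy j hj (by omega)
    have hyk := hy k (by omega) hk
    have h1 : 0 ≤ t j * y j := mul_nonneg (ht j).1 hyj.le
    have h2 : 0 ≤ t k * y k := mul_nonneg (ht k).1 hyk.le
    have h3 : t j * y j ≤ y j := by nlinarith [(ht j).2]
    have h4 : t k * y k ≤ y k := by nlinarith [(ht k).2]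
    rw [haj, hak]
    constructor <;> linarith
  · intro hx
    rw [Stmt9.memP_iff] at hx
    have key : ∀ j k : ℕ, 1 ≤ j → j ≤ n → 1 ≤ k → k ≤ n →
        Stmt9.aa n y x j ≤ Stmt9.aa n y x k + y k := by
      intro j k hj hjn hk hkn
      rcases lt_trichotomy j k with h | h | h
      · exact (hx j k hj h hkn).1
      · subst h; linarith [hy j hj hjn]
      · exact (hx k j hk h hjn).2
    have hne : (Icc 1 n).Nonempty := Finset.nonempty_Icc.mpr (by omega)
    set M := (Icc 1 n).sup' hne (Stmt9.aa n y x) with hM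
    obtain ⟨j0, hj0mem, hMj0⟩ := Finset.exists_mem_eq_sup' hne (Stmt9.aa n y x)
    rw [Finset.mem_Icc] at hj0mem
    refine ⟨fun m => if h : 1 ≤ m ∧ m ≤ n then (M - Stmt9.aa n y x m) / y m else 0, ?_, ?_⟩
    · intro m
      beta_reduce
      by_cases h : 1 ≤ m ∧ m ≤ n
      · rw [dif_pos h]
        have hym := hy m h.1 h.2
        have hle : Stmt9.aa n y x m ≤ M :=
          Finset.le_sup' _ (Finset.mem_Icc.mpr ⟨h.1, h.2⟩)
        have hub : M ≤ Stmt9.aa n y x m + y m := by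
          rw [hM.trans hMj0]; exact key j0 m hj0mem.1 hj0mem.2 h.1 h.2
        constructor
        · exact div_nonneg (by linarith) hym.le
        · rw [div_le_one hym]; linarith
      · rw [dif_neg h]; norm_num
    · funext i
      have hi := i.isLt
      rw [Stmt9.qCoord n hn y _ i]
      have hp1 : 1 ≤ (i : ℕ) + 1 ∧ (i : ℕ) + 1 ≤ n := ⟨by omega, by omega⟩
      have hp2 : 1 ≤ (i : ℕ) + 2 ∧ (i : ℕ) + 2 ≤ n := ⟨by omega, by omega⟩
      rw [dif_pos hp1, dif_pos hp2,
        div_mul_cancel₀ _ (hy _ hp1.1 hp1.2).ne',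
        div_mul_cancel₀ _ (hy _ hp2.1 hp2.2).ne']
      have hA : Stmt9.A n x ((i : ℕ) + 2) = Stmt9.A n x ((i : ℕ) + 1) + coord n x ((i : ℕ) + 1) := by
        unfold Stmt9.A
        rw [show ((i : ℕ) + 2) - 1 = (i : ℕ) + 1 by omega,
          show ((i : ℕ) + 1) - 1 = (i : ℕ) by omega,
          Finset.sum_Ioc_succ_top (by omega)]
      have hY : ∑ m ∈ Ioc 1 ((i : ℕ) + 2), y m
          = ∑ m ∈ Ioc 1 ((i : ℕ) + 1), y m + y ((i : ℕ) + 2) :=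
        Finset.sum_Ioc_succ_top (by omega) _
      have hc : coord n x ((i : ℕ) + 1) = x i := by
        rw [coord, dif_pos ⟨by omega, by omega⟩]
        congr 1
      have haa : Stmt9.aa n y x ((i : ℕ) + 2)
          = Stmt9.aa n y x ((i : ℕ) + 1) + x i - y ((i : ℕ) + 2) := by
        unfold Stmt9.aa
        rw [hA, hY, hc]; ring
      linarith
end

section
/- With Q and Q_1, …, Q_n as defined, one has ⋃_{j=1}^{n} Q_j = Q. -/
open Finset

lemma sumV (n : ℕ) (hn : 2 ≤ n) : (∑ m ∈ Icc 1 n, stdV n m) = 0 := by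
  funext i
  have hi := i.isLt
  have h1 : (i : ℕ) + 1 ∈ Icc 1 n := by simp [Finset.mem_Icc]; omega
  have h2 : (i : ℕ) + 2 ∈ Icc 1 n := by simp [Finset.mem_Icc]; omega
  simp only [Finset.sum_apply, stdV, Pi.zero_apply, Finset.sum_sub_distrib,
    Finset.sum_ite_eq, h1, h2, if_pos]
  ring

/-- `⋃_{j=1}^{n} Q_j = Q`. -/
theorem statement10 (n : ℕ) (hn : 2 ≤ n) (y : ℕ → ℝ)
    (hy : ∀ m, 1 ≤ m → m ≤ n → 0 < y m) :
    (⋃ j ∈ Icc 1 n, polyQj n y j) = polyQ n y := by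
  ext x
  simp only [Set.mem_iUnion, polyQ, polyQj, Set.mem_setOf_eq]
  constructor
  · rintro ⟨j, hj, t, ht, rfl⟩
    refine ⟨Function.update t j 0, ?_, ?_⟩
    · intro m
      by_cases h : m = j <;> simp [Function.update, h, ht m]
    · congr 1
      rw [← Finset.add_sum_erase _ _ hj]
      have : Function.update t j 0 j = 0 := by simp
      rw [this]
      simp only [zero_mul, zero_smul, zero_add]
      exact (Finset.sum_congr rfl fun m hm => by
        rw [Function.update_of_ne (Finset.ne_of_mem_erase hm)]).symm
  · rintro ⟨t, ht, rfl⟩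
    obtain ⟨j, hj, hmin⟩ := Finset.exists_min_image (Icc 1 n) (fun m => t m * y m)
      ⟨1, by simp [Finset.mem_Icc]; omega⟩
    have hjy := hy j (Finset.mem_Icc.mp hj).1 (Finset.mem_Icc.mp hj).2
    have hcj0 : 0 ≤ t j * y j := mul_nonneg (ht j).1 hjy.le
    refine ⟨j, hj, fun m => if m ∈ Icc 1 n then (t m * y m - t j * y j) / y m else 0, ?_, ?_⟩
    · intro m
      by_cases h : m ∈ Icc 1 n
      · have hym := hy m (Finset.mem_Icc.mp h).1 (Finset.mem_Icc.mp h).2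
        have h1 : t j * y j ≤ t m * y m := hmin m h
        have h2 : t m * y m ≤ y m := by nlinarith [(ht m).2, hym]
        constructor
        · simp only [if_pos h]
          exact div_nonneg (by linarith) hym.le
        · simp only [if_pos h]
          rw [div_le_one hym]; linarith
      · simp [h]
    · congr 1
      have key : ∀ m ∈ (Icc 1 n).erase j,
          ((if m ∈ Icc 1 n then (t m * y m - t j * y j) / y m else 0) * y m) • stdV n m
          = (t m * y m - t j * y j) • stdV n m := by
        intro m hm
        have h := Finset.mem_of_mem_erase hm
        have hym := hy m (Finset.mem_Icc.mp h).1 (Finset.mem_Icc.mp h).2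
        rw [if_pos h, div_mul_cancel₀ _ hym.ne']
      rw [Finset.sum_congr rfl key]
      have h0 : (t j * y j - t j * y j) • stdV n j = 0 := by simp
      rw [← zero_add (∑ m ∈ (Icc 1 n).erase j, _), ← h0,
        Finset.add_sum_erase _ (fun m => (t m * y m - t j * y j) • stdV n m) hj]
      simp only [sub_smul, Finset.sum_sub_distrib, ← Finset.smul_sum, sumV n hn, smul_zero,
        sub_zero]
end

section
/- With Q_1, …, Q_n as defined, for all j ≠ k in {1, …, n} one has Q_j ∩ Q_k ⊆ w + { Σ_{m ∈ {1,…,n} \ {j,k}} u_m v_m : u_m ≥ 0 for all m }; in particular, Q_j ∩ Q_k is contained in a translate of a cone spanned by n − 2 vectors, hence in an (n−2)-dimensional affine cone in ℝ^{n−1}. -/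
open Finset

private lemma coordSum (n : ℕ) (hn : 2 ≤ n) (c : ℕ → ℝ) (i : Fin (n-1)) :
    (∑ m ∈ Icc 1 n, (c m) • stdV n m) i = c ((i:ℕ)+1) - c ((i:ℕ)+2) := by
  have hi := i.2
  rw [Finset.sum_apply]
  simp only [Pi.smul_apply, stdV, smul_eq_mul, mul_sub, mul_ite, mul_one, mul_zero]
  rw [Finset.sum_sub_distrib, Finset.sum_ite_eq, Finset.sum_ite_eq,
    if_pos (by simp [Finset.mem_Icc]; omega), if_pos (by simp [Finset.mem_Icc]; omega)]

private lemma extendSum (n : ℕ) (E : Finset ℕ) (hE : E ⊆ Icc 1 n) (f : ℕ → ℝ) :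
    ∑ m ∈ E, (f m) • stdV n m
      = ∑ m ∈ Icc 1 n, ((if m ∈ E then f m else 0)) • stdV n m := by
  have h1 : ∑ m ∈ E, (f m) • stdV n m
      = ∑ m ∈ E, ((if m ∈ E then f m else 0)) • stdV n m :=
    Finset.sum_congr rfl fun m hm => by rw [if_pos hm]
  rw [h1]
  exact Finset.sum_subset hE fun m hm hmE => by rw [if_neg hmE, zero_smul]

/-- For `j ≠ k` in `{1, …, n}`, `Q_j ∩ Q_k` is contained in the translate by `w` of the
cone spanned by the `n − 2` vectors `v_m`, `m ∈ {1,…,n} \ {j,k}` (an `(n−2)`-dimensional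
affine cone in `ℝ^{n−1}`). -/
theorem statement11 (n : ℕ) (hn : 2 ≤ n) (y : ℕ → ℝ)
    (hy : ∀ m, 1 ≤ m → m ≤ n → 0 < y m)
    (j k : ℕ) (hj : j ∈ Icc 1 n) (hk : k ∈ Icc 1 n) (hjk : j ≠ k) :
    polyQj n y j ∩ polyQj n y k ⊆
      { x | ∃ u : ℕ → ℝ, (∀ m, 0 ≤ u m) ∧
          x = wVec n y + ∑ m ∈ ((Icc 1 n).erase j).erase k, u m • stdV n m } := by
  rintro x ⟨⟨t, ht, hxt⟩, ⟨s, hs, hxs⟩⟩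
  set a : ℕ → ℝ := fun m => if m ∈ (Icc 1 n).erase j then t m * y m else 0 with ha
  set b : ℕ → ℝ := fun m => if m ∈ (Icc 1 n).erase k then s m * y m else 0 with hb
  have hxa : x = wVec n y + ∑ m ∈ Icc 1 n, a m • stdV n m := by
    rw [hxt, extendSum n _ (Finset.erase_subset _ _)]
  have hxb : x = wVec n y + ∑ m ∈ Icc 1 n, b m • stdV n m := by
    rw [hxs, extendSum n _ (Finset.erase_subset _ _)]
  have heq : ∀ i : Fin (n-1),
      a ((i:ℕ)+1) - b ((i:ℕ)+1) = a ((i:ℕ)+2) - b ((i:ℕ)+2) := by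
    intro i
    have h1 := congrFun (hxa.symm.trans hxb) i
    simp only [Pi.add_apply, coordSum n hn] at h1
    linarith
  have hconst : ∀ m, 1 ≤ m → m ≤ n → a m - b m = a 1 - b 1 := by
    intro m
    induction m with
    | zero => omega
    | succ m ih =>
      intro h1 h2
      rcases Nat.eq_zero_or_pos m with hm0 | hm1
      · subst hm0; rfl
      · have hstep := heq ⟨m - 1, by omega⟩
        have e1 : (m - 1) + 1 = m := by omega
        have e2 : (m - 1) + 2 = m + 1 := by omega
        simp only [e1, e2] at hstep
        rw [← hstep]
        exact ih hm1 (by omega)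
  have hannneg : ∀ m, 0 ≤ a m := by
    intro m
    rw [ha]
    dsimp only
    split_ifs with h
    · have hm := Finset.mem_of_mem_erase h
      rw [Finset.mem_Icc] at hm
      exact mul_nonneg (ht m).1 (hy m hm.1 hm.2).le
    · exact le_refl 0
  have hbnneg : ∀ m, 0 ≤ b m := by
    intro m
    rw [hb]
    dsimp only
    split_ifs with h
    · have hm := Finset.mem_of_mem_erase h
      rw [Finset.mem_Icc] at hm
      exact mul_nonneg (hs m).1 (hy m hm.1 hm.2).le
    · exact le_refl 0
  have haj : a j = 0 := by rw [ha]; exact if_neg (Finset.notMem_erase j _)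
  have hbk : b k = 0 := by rw [hb]; exact if_neg (Finset.notMem_erase k _)
  rw [Finset.mem_Icc] at hj hk
  have hdj : a j - b j ≤ 0 := by rw [haj]; linarith [hbnneg j]
  have hdk : 0 ≤ a k - b k := by rw [hbk]; linarith [hannneg k]
  have h10 : a 1 - b 1 = 0 := by
    have h1 := hconst j hj.1 hj.2
    have h2 := hconst k hk.1 hk.2
    linarith
  have hak : a k = 0 := by
    have := hconst k hk.1 hk.2
    rw [h10] at this
    rw [hbk] at this
    linarith
  refine ⟨a, hannneg, ?_⟩
  rw [hxa]
  congr 1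
  refine (Finset.sum_subset (fun m hm =>
    Finset.mem_of_mem_erase (Finset.mem_of_mem_erase hm)) ?_).symm
  intro m hm hmE
  by_cases hmk : m = k
  · subst hmk; rw [hak, zero_smul]
  · have hmj : m = j := by
      by_contra hmj
      exact hmE (Finset.mem_erase.mpr ⟨hmk, Finset.mem_erase.mpr ⟨hmj, hm⟩⟩)
    subst hmj; rw [haj, zero_smul]
end

section
/- The polytope P is a zonotope: P equals the Minkowski sum {w} + S_1 + S_2 + ⋯ + S_n, where S_m = { s · y_m v_m : 0 ≤ s ≤ 1 } is the line segment from 0 to y_m v_m. -/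
open Finset

open Pointwise

/-!
Writing `x = w + ∑ c_m v_m`, the coordinates are `x_m = y_{m+1} + c_m − c_{m+1}`, so
`x_j + ⋯ + x_{k−1} = y_{j+1} + ⋯ + y_k + c_j − c_k` and the inequalities defining `P` say
`−y_k ≤ c_j − c_k ≤ y_j`. Every `x` has such a representation, unique up to adding a constant
to `c`, and `x` lies in the zonotope iff the constant can be chosen with `0 ≤ c_m ≤ y_m`, i.e. iff
the intervals `[c_m − y_m, c_m]` have a common point. Intervals on a line have a common point as
soon as they pairwise intersect, which is exactly what the inequalities of `P` say.
-/

theorem Finset.exists_forall_mem_Icc_of_forall_le {ι α : Type*} [Lattice α] [Nonempty α]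
    (s : Finset ι) (a b : ι → α) (h : ∀ i ∈ s, ∀ j ∈ s, a i ≤ b j) :
    ∃ d, ∀ i ∈ s, a i ≤ d ∧ d ≤ b i := by
  rcases s.eq_empty_or_nonempty with rfl | hs
  · exact ⟨Classical.arbitrary α, by simp⟩
  · exact ⟨s.sup' hs a, fun i hi => ⟨le_sup' a hi, sup'_le hs a fun j hj => h j hj i hi⟩⟩

theorem setOf_unitInterval_smul_smul_eq {𝕜 E : Type*} [Field 𝕜] [LinearOrder 𝕜]
    [IsStrictOrderedRing 𝕜] [AddCommGroup E] [Module 𝕜 E] {r : 𝕜} (hr : 0 < r) (u : E) :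
    {z | ∃ s : 𝕜, 0 ≤ s ∧ s ≤ 1 ∧ z = s • (r • u)} =
      {z | ∃ c : 𝕜, 0 ≤ c ∧ c ≤ r ∧ z = c • u} := by
  ext z
  constructor
  · rintro ⟨s, hs0, hs1, rfl⟩
    exact ⟨s * r, mul_nonneg hs0 hr.le, mul_le_of_le_one_left hr.le hs1, smul_smul s r u⟩
  · rintro ⟨c, hc0, hcr, rfl⟩
    refine ⟨c / r, div_nonneg hc0 hr.le, (div_le_one hr).2 hcr, ?_⟩
    rw [smul_smul, div_mul_cancel₀ c hr.ne']

theorem Set.mem_finsetSum_setOf_smul_iff {ι 𝕜 E : Type*} [Semiring 𝕜] [PartialOrder 𝕜]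
    [AddCommMonoid E] [Module 𝕜 E] (s : Finset ι) (r : ι → 𝕜) (u : ι → E) (x : E) :
    x ∈ ∑ i ∈ s, {z | ∃ c : 𝕜, 0 ≤ c ∧ c ≤ r i ∧ z = c • u i} ↔
      ∃ c : ι → 𝕜, (∀ i ∈ s, 0 ≤ c i ∧ c i ≤ r i) ∧ x = ∑ i ∈ s, c i • u i := by
  rw [Set.mem_finsetSum]
  constructor
  · rintro ⟨g, hg, rfl⟩
    choose! c hc using fun i (hi : i ∈ s) => hg hi
    exact ⟨c, fun i hi => ⟨(hc i hi).1, (hc i hi).2.1⟩,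
      sum_congr rfl fun i hi => (hc i hi).2.2⟩
  · rintro ⟨c, hc, rfl⟩
    exact ⟨fun i => c i • u i, fun {i} hi => ⟨c i, (hc i hi).1, (hc i hi).2, rfl⟩, rfl⟩

section

variable {n : ℕ} {y : ℕ → ℝ}

theorem coord_add_one (x : Fin (n - 1) → ℝ) (i : Fin (n - 1)) : coord n x (i + 1) = x i := by
  rw [coord, dif_pos ⟨by omega, by omega⟩]
  rfl

theorem sum_smul_stdV_apply (c : ℕ → ℝ) (i : Fin (n - 1)) :
    (∑ m ∈ Icc 1 n, c m • stdV n m) i = c (i + 1) - c (i + 2) := by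
  have hi := i.isLt
  simp only [Finset.sum_apply, Pi.smul_apply, stdV, smul_eq_mul, mul_sub, sum_sub_distrib,
    mul_ite, mul_one, mul_zero, sum_ite_eq, mem_Icc]
  rw [if_pos (by omega), if_pos (by omega)]

theorem coord_wVec_add_sum_smul_stdV (c : ℕ → ℝ) {m : ℕ} (hm1 : 1 ≤ m) (hmn : m < n) :
    coord n (wVec n y + ∑ k ∈ Icc 1 n, c k • stdV n k) m = y (m + 1) + (c m - c (m + 1)) := by
  obtain ⟨i, rfl⟩ : ∃ i : Fin (n - 1), (i : ℕ) + 1 = m := ⟨⟨m - 1, by omega⟩, by simp; omega⟩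
  rw [coord_add_one, Pi.add_apply, sum_smul_stdV_apply]
  rfl

theorem mem_polyP_iff (x : Fin (n - 1) → ℝ) :
    x ∈ polyP n y ↔ ∀ j k, 1 ≤ j → j < k → k ≤ n →
      -y k ≤ ∑ i ∈ Ico j k, (coord n x i - y (i + 1)) ∧
        ∑ i ∈ Ico j k, (coord n x i - y (i + 1)) ≤ y j := by
  refine forall₂_congr fun j k => imp_congr_right fun _ => forall_congr' fun hjk => ?_
  refine imp_congr_right fun _ => ?_
  have hIcc_pred : ∀ a, Icc a (k - 1) = Ico a k := fun a => by
    ext; simp only [mem_Icc, mem_Ico]; omega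
  have hshift : ∑ i ∈ Ico j k, (coord n x i - y (i + 1))
      = ∑ i ∈ Ico j k, coord n x i - (∑ i ∈ Ico (j + 1) k, y i + y k) := by
    rw [sum_sub_distrib, sum_Ico_add', ← sum_Ico_succ_top hjk]
  have hfull : ∑ i ∈ Icc j k, y i = y j + (∑ i ∈ Ico (j + 1) k, y i + y k) := by
    rw [← Ico_add_one_right_eq_Icc, sum_eq_sum_Ico_succ_bot (by omega), sum_Ico_succ_top hjk]
  rw [hIcc_pred, hIcc_pred, hshift, hfull]
  constructor <;> rintro ⟨h₁, h₂⟩ <;> constructor <;> linarith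

theorem sum_Ico_coord_wVec_add_sum_smul_stdV (c : ℕ → ℝ) {j k : ℕ} (hj : 1 ≤ j) (hjk : j ≤ k)
    (hkn : k ≤ n) :
    ∑ i ∈ Ico j k, (coord n (wVec n y + ∑ m ∈ Icc 1 n, c m • stdV n m) i - y (i + 1)) =
      c j - c k := by
  have h_term : ∀ i ∈ Ico j k,
      coord n (wVec n y + ∑ m ∈ Icc 1 n, c m • stdV n m) i - y (i + 1) = c i - c (i + 1) := by
    intro i hi
    rw [mem_Ico] at hi
    rw [coord_wVec_add_sum_smul_stdV c (by omega) (by omega), add_sub_cancel_left]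
  rw [sum_congr rfl h_term, ← neg_sub, ← sum_Ico_sub c hjk, ← sum_neg_distrib]
  simp only [neg_sub]

theorem wVec_add_sum_smul_stdV_mem_polyP {c : ℕ → ℝ}
    (hc : ∀ m ∈ Icc 1 n, 0 ≤ c m ∧ c m ≤ y m) :
    wVec n y + ∑ m ∈ Icc 1 n, c m • stdV n m ∈ polyP n y := by
  rw [mem_polyP_iff]
  intro j k hj hjk hkn
  rw [sum_Ico_coord_wVec_add_sum_smul_stdV c hj hjk.le hkn]
  have hcj := hc j (mem_Icc.2 ⟨hj, by omega⟩)
  have hck := hc k (mem_Icc.2 ⟨by omega, hkn⟩)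
  constructor <;> linarith

theorem exists_eq_wVec_add_sum_smul_stdV_of_mem_polyP (hy : ∀ m, 1 ≤ m → m ≤ n → 0 ≤ y m)
    {x : Fin (n - 1) → ℝ} (hx : x ∈ polyP n y) :
    ∃ c : ℕ → ℝ, (∀ m ∈ Icc 1 n, 0 ≤ c m ∧ c m ≤ y m) ∧
      x = wVec n y + ∑ m ∈ Icc 1 n, c m • stdV n m := by
  rw [mem_polyP_iff] at hx
  set g : ℕ → ℝ := fun m => ∑ i ∈ Ico m n, (coord n x i - y (i + 1)) with g_def
  have g_sub : ∀ j k, j ≤ k → k ≤ n → g j - g k = ∑ i ∈ Ico j k, (coord n x i - y (i + 1)) := by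
    intro j k hjk hkn
    simp only [g_def]
    rw [← sum_Ico_consecutive _ hjk hkn, add_sub_cancel_right]
  have g_le : ∀ j ∈ Icc 1 n, ∀ k ∈ Icc 1 n, g j - y j ≤ g k := by
    intro j hj k hk
    rw [mem_Icc] at hj hk
    rcases lt_trichotomy j k with hjk | rfl | hkj
    · linarith [(hx j k hj.1 hjk hk.2).2, g_sub j k hjk.le hk.2]
    · linarith [hy j hj.1 hj.2]
    · linarith [(hx k j hk.1 hkj hj.2).1, g_sub k j hkj.le hj.2]
  obtain ⟨d, hd⟩ := exists_forall_mem_Icc_of_forall_le _ _ _ g_le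
  refine ⟨fun m => g m - d, fun m hm => ⟨by linarith [hd m hm], by linarith [hd m hm]⟩, ?_⟩
  funext i
  have g_step : g (i + 1) - g (i + 2) = x i - y (i + 2) := by
    rw [g_sub _ _ (by omega) (by omega), Nat.Ico_succ_singleton, sum_singleton, coord_add_one]
  rw [Pi.add_apply, sum_smul_stdV_apply]
  change x i = y (i + 2) + _
  linarith

end

theorem statement12_general (n : ℕ) (y : ℕ → ℝ)
    (hy : ∀ m, 1 ≤ m → m ≤ n → 0 < y m) :
    polyP n y =
      {wVec n y} + ∑ m ∈ Icc 1 n,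
        ({ z | ∃ s : ℝ, 0 ≤ s ∧ s ≤ 1 ∧ z = s • (y m • stdV n m) } :
          Set (Fin (n - 1) → ℝ)) := by
  have segments : ∀ m ∈ Icc 1 n,
      ({ z | ∃ s : ℝ, 0 ≤ s ∧ s ≤ 1 ∧ z = s • (y m • stdV n m) } : Set (Fin (n - 1) → ℝ)) =
        { z | ∃ c : ℝ, 0 ≤ c ∧ c ≤ y m ∧ z = c • stdV n m } :=
    fun m hm => setOf_unitInterval_smul_smul_eq (hy m (mem_Icc.1 hm).1 (mem_Icc.1 hm).2) _
  ext x
  rw [sum_congr rfl segments, Set.singleton_add, Set.mem_image]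
  constructor
  · intro hx
    obtain ⟨c, hc, rfl⟩ :=
      exists_eq_wVec_add_sum_smul_stdV_of_mem_polyP (fun m h₁ h₂ => (hy m h₁ h₂).le) hx
    exact ⟨_, (Set.mem_finsetSum_setOf_smul_iff _ _ _ _).2 ⟨c, hc, rfl⟩, rfl⟩
  · rintro ⟨z, hz, rfl⟩
    obtain ⟨c, hc, rfl⟩ := (Set.mem_finsetSum_setOf_smul_iff _ _ _ _).1 hz
    exact wVec_add_sum_smul_stdV_mem_polyP hc

/-- `P` is a zonotope: `P = {w} + S_1 + ⋯ + S_n` (Minkowski sum), where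
`S_m = { s • (y_m v_m) : 0 ≤ s ≤ 1 }` is the segment from `0` to `y_m v_m`. -/
theorem statement12 (n : ℕ) (hn : 2 ≤ n) (y : ℕ → ℝ)
    (hy : ∀ m, 1 ≤ m → m ≤ n → 0 < y m) :
    polyP n y =
      {wVec n y} + ∑ m ∈ Icc 1 n,
        ({ z | ∃ s : ℝ, 0 ≤ s ∧ s ≤ 1 ∧ z = s • (y m • stdV n m) } :
          Set (Fin (n - 1) → ℝ)) :=
  statement12_general n y hy
end

section
/- The Lebesgue volume of the polytope P in ℝ^{n−1} equals Σ_{j=1}^{n} y_1 ⋯ y_{j−1} y_{j+1} ⋯ y_n, i.e., the sum over j of the product of all the y_i with i ≠ j. -/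
open Finset

open MeasureTheory
section Aux

open Finset MeasureTheory

variable (n : ℕ) (y : ℕ → ℝ)

/-- The `a`-coordinates: `Aco n a k = a_{k-2}` for `2 ≤ k ≤ n`, else `0`. -/
noncomputable def Aco (a : Fin (n - 1) → ℝ) (k : ℕ) : ℝ :=
  if h : 2 ≤ k ∧ k ≤ n then a ⟨k - 2, by omega⟩ else 0

/-- partial sums of `y` from `2` to `k`. -/
noncomputable def Ysum (k : ℕ) : ℝ := ∑ m ∈ Icc 2 k, y m

/-- The linear part of the map from `a`-coordinates to `x`-coordinates. -/
noncomputable def Dmap (a : Fin (n - 1) → ℝ) : Fin (n - 1) → ℝ :=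
  fun i => Aco n a ((i : ℕ) + 2) - Aco n a ((i : ℕ) + 1)

noncomputable def Gmap (a : Fin (n - 1) → ℝ) : Fin (n - 1) → ℝ :=
  wVec n y + Dmap n a

/-- Inverse of `Gmap`. -/
noncomputable def Emap (x : Fin (n - 1) → ℝ) : Fin (n - 1) → ℝ :=
  fun i => (∑ m ∈ Icc 1 ((i : ℕ) + 1), coord n x m) - Ysum y ((i : ℕ) + 2)

/-- The polytope in `a`-coordinates. -/
noncomputable def Pa : Set (Fin (n - 1) → ℝ) :=
  { a | ∀ p q, 1 ≤ p → p ≤ n → 1 ≤ q → q ≤ n → Aco n a q - Aco n a p ≤ y p }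

noncomputable def Rset (j : ℕ) : Set (Fin (n - 1) → ℝ) :=
  { a | ∀ k, 1 ≤ k → k ≤ n → Aco n a k ≤ Aco n a j ∧ Aco n a j - y k ≤ Aco n a k }

variable {n y}

theorem Aco_apply (a : Fin (n - 1) → ℝ) (k : ℕ) (h2 : 2 ≤ k) (hk : k ≤ n) :
    Aco n a k = a ⟨k - 2, by omega⟩ := dif_pos ⟨h2, hk⟩

theorem Ysum_succ (k : ℕ) (hk : 1 ≤ k) : Ysum y (k + 1) = Ysum y k + y (k + 1) := by
  rw [Ysum, Ysum, Finset.sum_Icc_succ_top (by omega : 2 ≤ k + 1)]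

theorem ysum_diff (k : ℕ) (h2 : 2 ≤ k) : Ysum y k - Ysum y (k - 1) = y k := by
  have := Ysum_succ (y := y) (k - 1) (by omega)
  rw [show k - 1 + 1 = k by omega] at this
  linarith

theorem coord_Gmap (a : Fin (n - 1) → ℝ) (m : ℕ) (h1 : 1 ≤ m) (h2 : m ≤ n - 1) :
    coord n (Gmap n y a) m = Aco n a (m + 1) - Aco n a m + y (m + 1) := by
  rw [coord, dif_pos ⟨h1, h2⟩]
  show wVec n y _ + Dmap n a _ = _
  rw [wVec, Dmap]
  simp only []
  rw [show m - 1 + 2 = m + 1 by omega, show m - 1 + 1 = m by omega]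
  ring

theorem prefix_sum_Gmap (a : Fin (n - 1) → ℝ) (k : ℕ) (h1 : 1 ≤ k) (h2 : k ≤ n) :
    ∑ m ∈ Icc 1 (k - 1), coord n (Gmap n y a) m = Aco n a k + Ysum y k := by
  induction k with
  | zero => omega
  | succ K ih =>
    rcases Nat.eq_or_lt_of_le h1 with h | h
    · have hK : K = 0 := by omega
      subst hK
      simp [Ysum, Aco]
    · have hK1 : 1 ≤ K := by omega
      have hKn : K ≤ n := by omega
      have hsplit : Icc 1 (K + 1 - 1) = Icc 1 (K - 1) ∪ {K} := by
        ext m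
        simp only [Finset.mem_union, Finset.mem_Icc, Finset.mem_singleton]
        omega
      rw [hsplit, Finset.sum_union (by
        simp only [Finset.disjoint_singleton_right, Finset.mem_Icc]; omega)]
      rw [ih hK1 hKn, Finset.sum_singleton,
        coord_Gmap a K hK1 (by omega), Ysum_succ K hK1]
      ring

theorem mid_sum_Gmap (a : Fin (n - 1) → ℝ) (j k : ℕ) (h1 : 1 ≤ j) (h2 : j < k) (h3 : k ≤ n) :
    ∑ m ∈ Icc j (k - 1), coord n (Gmap n y a) m =
      (Aco n a k + Ysum y k) - (Aco n a j + Ysum y j) := by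
  have hs : ∑ m ∈ Icc 1 (j - 1), coord n (Gmap n y a) m
      + ∑ m ∈ Icc j (k - 1), coord n (Gmap n y a) m
      = ∑ m ∈ Icc 1 (k - 1), coord n (Gmap n y a) m := by
    have e1 : Icc 1 (j - 1) = Ioc 0 (j - 1) := by
      ext m; simp only [Finset.mem_Icc, Finset.mem_Ioc]; omega
    have e2 : Icc j (k - 1) = Ioc (j - 1) (k - 1) := by
      ext m; simp only [Finset.mem_Icc, Finset.mem_Ioc]; omega
    have e3 : Icc 1 (k - 1) = Ioc 0 (k - 1) := by
      ext m; simp only [Finset.mem_Icc, Finset.mem_Ioc]; omega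
    rw [e1, e2, e3]
    exact Finset.sum_Ioc_consecutive _ (by omega) (by omega)
  have p1 := prefix_sum_Gmap (y := y) a j h1 (by omega)
  have p2 := prefix_sum_Gmap (y := y) a k (by omega) h3
  linarith [hs, p1, p2]

theorem ysum_upper (j k : ℕ) (h1 : 1 ≤ j) (h2 : j < k) :
    ∑ m ∈ Icc j k, y m = y j + (Ysum y k - Ysum y j) := by
  have e2 : Icc (j+1) k = Ioc j k := by
    ext m; simp only [Finset.mem_Icc, Finset.mem_Ioc]; omega
  have hs : Ysum y j + ∑ m ∈ Ioc j k, y m = Ysum y k := by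
    rw [Ysum, Ysum, show Icc 2 j = Ioc 1 j by
        ext m; simp only [Finset.mem_Icc, Finset.mem_Ioc]; omega,
      show Icc 2 k = Ioc 1 k by
        ext m; simp only [Finset.mem_Icc, Finset.mem_Ioc]; omega]
    exact Finset.sum_Ioc_consecutive _ (by omega) (by omega)
  have hsplit : Icc j k = {j} ∪ Icc (j+1) k := by
    ext m; simp only [Finset.mem_union, Finset.mem_Icc, Finset.mem_singleton]; omega
  rw [hsplit, Finset.sum_union (by
    simp only [Finset.disjoint_singleton_left, Finset.mem_Icc]; omega),
    Finset.sum_singleton, e2]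
  linarith

theorem ysum_lower (j k : ℕ) (h1 : 1 ≤ j) (h2 : j < k) :
    ∑ m ∈ Icc (j+1) (k-1), y m = Ysum y (k-1) - Ysum y j := by
  have e2 : Icc (j+1) (k-1) = Ioc j (k-1) := by
    ext m; simp only [Finset.mem_Icc, Finset.mem_Ioc]; omega
  rcases le_or_gt k (j+1) with h | h
  · have hk : k = j + 1 := by omega
    subst hk
    simp only [e2]
    rw [Nat.add_sub_cancel, Finset.Ioc_self, Finset.sum_empty]
    ring_nf
  · have hs : Ysum y j + ∑ m ∈ Ioc j (k-1), y m = Ysum y (k-1) := by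
      rw [Ysum, Ysum, show Icc 2 j = Ioc 1 j by
          ext m; simp only [Finset.mem_Icc, Finset.mem_Ioc]; omega,
        show Icc 2 (k-1) = Ioc 1 (k-1) by
          ext m; simp only [Finset.mem_Icc, Finset.mem_Ioc]; omega]
      exact Finset.sum_Ioc_consecutive _ (by omega) (by omega)
    rw [e2]; linarith

/-- Membership transfer: `Gmap a ∈ polyP ↔ a ∈ Pa`. -/
theorem Gmap_mem_polyP (hy : ∀ m, 1 ≤ m → m ≤ n → 0 < y m) (a : Fin (n - 1) → ℝ) :
    Gmap n y a ∈ polyP n y ↔ a ∈ Pa n y := by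
  constructor
  · intro hx p q hp hpn hq hqn
    rcases lt_trichotomy p q with h | h | h
    · have := (hx p q hp h hqn).2
      rw [mid_sum_Gmap a p q hp h hqn, ysum_upper p q hp h] at this
      linarith
    · subst h
      have := hy p hp hpn
      linarith
    · have := (hx q p hq h hpn).1
      rw [mid_sum_Gmap a q p hq h hpn, ysum_lower q p hq h] at this
      have hd := ysum_diff (y := y) p (by omega)
      linarith
  · intro ha j k hj hjk hkn
    constructor
    · rw [mid_sum_Gmap a j k hj hjk hkn, ysum_lower j k hj hjk]
      have h1 := ha k j (by omega) hkn hj (by omega)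
      have hd := ysum_diff (y := y) k (by omega)
      linarith
    · rw [mid_sum_Gmap a j k hj hjk hkn, ysum_upper j k hj hjk]
      have h1 := ha j k hj (by omega) (by omega) hkn
      linarith

theorem Aco_Emap (x : Fin (n - 1) → ℝ) (k : ℕ) (h2 : 2 ≤ k) (hk : k ≤ n) :
    Aco n (Emap n y x) k = (∑ m ∈ Icc 1 (k - 1), coord n x m) - Ysum y k := by
  rw [Aco_apply _ k h2 hk]
  show (∑ m ∈ Icc 1 ((k - 2) + 1), coord n x m) - Ysum y ((k - 2) + 2) = _
  rw [show k - 2 + 1 = k - 1 by omega, show k - 2 + 2 = k by omega]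

theorem coord_eq (x : Fin (n - 1) → ℝ) (i : Fin (n - 1)) :
    coord n x ((i : ℕ) + 1) = x i := by
  rw [coord, dif_pos ⟨by omega, by exact_mod_cast i.2⟩]
  exact congrArg x (Fin.ext (show (i : ℕ) + 1 - 1 = (i : ℕ) by omega))

theorem Gmap_Emap (x : Fin (n - 1) → ℝ) : Gmap n y (Emap n y x) = x := by
  funext i
  have hi : (i : ℕ) < n - 1 := i.2
  show wVec n y i + (Aco n (Emap n y x) ((i:ℕ)+2) - Aco n (Emap n y x) ((i:ℕ)+1)) = x i
  rw [Aco_Emap x ((i:ℕ)+2) (by omega) (by omega),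
    show (i:ℕ)+2-1 = (i:ℕ)+1 by omega]
  have hw : wVec n y i = y ((i:ℕ)+2) := rfl
  rcases Nat.eq_zero_or_pos (i:ℕ) with h0 | hpos
  · have hz : Aco n (Emap n y x) ((i:ℕ)+1) = 0 := by
      rw [Aco, dif_neg (by omega)]
    rw [hz, hw, h0]
    rw [show Icc 1 (0+1) = {1} by rfl, Finset.sum_singleton]
    have hc : coord n x 1 = x i := by
      have := coord_eq x i
      rwa [h0] at this
    have hYs : Ysum y (0+2) = y 2 := by
      rw [Ysum]
      show ∑ m ∈ Icc 2 2, y m = y 2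
      rw [Finset.Icc_self, Finset.sum_singleton]
    rw [hc, hYs]
    ring
  · rw [Aco_Emap x ((i:ℕ)+1) (by omega) (by omega), hw,
      show (i:ℕ)+1-1 = (i:ℕ) by omega]
    have hsum : ∑ m ∈ Icc 1 ((i:ℕ)+1), coord n x m
        = (∑ m ∈ Icc 1 (i:ℕ), coord n x m) + x i := by
      rw [Finset.sum_Icc_succ_top (by omega : 1 ≤ (i:ℕ)+1), coord_eq x i]
    have hYs : Ysum y ((i:ℕ)+2) = Ysum y ((i:ℕ)+1) + y ((i:ℕ)+2) :=
      Ysum_succ ((i:ℕ)+1) (by omega)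
    rw [hsum, hYs]
    ring

theorem Emap_Gmap (a : Fin (n - 1) → ℝ) : Emap n y (Gmap n y a) = a := by
  funext i
  have hi : (i:ℕ) < n - 1 := i.2
  show (∑ m ∈ Icc 1 ((i:ℕ)+1), coord n (Gmap n y a) m) - Ysum y ((i:ℕ)+2) = a i
  have hp := prefix_sum_Gmap (y := y) a ((i:ℕ)+2) (by omega) (by omega)
  rw [show (i:ℕ)+2-1 = (i:ℕ)+1 by omega] at hp
  rw [hp, Aco_apply a ((i:ℕ)+2) (by omega) (by omega)]
  rw [show ((⟨(i:ℕ)+2-2, by omega⟩ : Fin (n-1))) = i from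
    Fin.ext (show (i:ℕ)+2-2 = (i:ℕ) by omega)]
  ring

theorem polyP_eq_image (hy : ∀ m, 1 ≤ m → m ≤ n → 0 < y m) :
    polyP n y = Gmap n y '' Pa n y := by
  ext x
  constructor
  · intro hx
    refine ⟨Emap n y x, ?_, Gmap_Emap (y := y) x⟩
    rw [← Gmap_mem_polyP hy, Gmap_Emap x]
    exact hx
  · rintro ⟨a, ha, rfl⟩
    exact (Gmap_mem_polyP hy a).2 ha

theorem Pa_eq_union (hn : 2 ≤ n) : Pa n y = ⋃ j ∈ Finset.Icc 1 n, Rset n y j := by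
  ext a
  simp only [Set.mem_iUnion]
  constructor
  · intro ha
    obtain ⟨j, hj, hmax⟩ := Finset.exists_max_image (Finset.Icc 1 n)
      (fun k => Aco n a k) ⟨1, by simp; omega⟩
    simp only [Finset.mem_Icc] at hj
    refine ⟨j, by simp only [Finset.mem_Icc]; omega, fun k hk1 hkn => ⟨?_, ?_⟩⟩
    · exact hmax k (by simp only [Finset.mem_Icc]; omega)
    · have := ha k j hk1 hkn hj.1 hj.2
      linarith
  · rintro ⟨j, hj, hR⟩
    simp only [Finset.mem_Icc] at hj
    intro p q hp hpn hq hqn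
    have h1 := (hR q hq hqn).1
    have h2 := (hR p hp hpn).2
    linarith

/-- Linear involution for `j ≥ 2`. -/
noncomputable def phiFun (j : ℕ) (b : Fin (n - 1) → ℝ) : Fin (n - 1) → ℝ :=
  fun i => if (i : ℕ) = j - 2 then b i
    else (if h : j - 2 < n - 1 then b ⟨j - 2, h⟩ else 0) - b i

noncomputable def phiLin (j : ℕ) : (Fin (n - 1) → ℝ) →ₗ[ℝ] (Fin (n - 1) → ℝ) where
  toFun := phiFun (n := n) j
  map_add' b c := by
    funext i
    show phiFun (n := n) j (b + c) i = phiFun (n := n) j b i + phiFun (n := n) j c i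
    unfold phiFun
    by_cases h : (i : ℕ) = j - 2
    · rw [if_pos h, if_pos h, if_pos h]; rfl
    · rw [if_neg h, if_neg h, if_neg h]
      by_cases h2 : j - 2 < n - 1
      · rw [dif_pos h2, dif_pos h2, dif_pos h2]
        show b ⟨j-2,h2⟩ + c ⟨j-2,h2⟩ - (b i + c i) = _
        ring
      · rw [dif_neg h2, dif_neg h2, dif_neg h2]
        show (0:ℝ) - (b i + c i) = 0 - b i + (0 - c i)
        ring
  map_smul' r b := by
    funext i
    show phiFun (n := n) j (r • b) i = r • phiFun (n := n) j b i
    unfold phiFun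
    by_cases h : (i : ℕ) = j - 2
    · rw [if_pos h, if_pos h]; rfl
    · rw [if_neg h, if_neg h]
      by_cases h2 : j - 2 < n - 1
      · rw [dif_pos h2, dif_pos h2]
        show r * b ⟨j-2,h2⟩ - r * b i = r * (b ⟨j-2,h2⟩ - b i)
        ring
      · rw [dif_neg h2, dif_neg h2]
        show (0:ℝ) - r * b i = r * (0 - b i)
        ring

theorem phiFun_invol (j : ℕ) (hj : j - 2 < n - 1) (b : Fin (n - 1) → ℝ) :
    phiFun (n := n) j (phiFun (n := n) j b) = b := by
  funext i
  by_cases h : (i : ℕ) = j - 2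
  · show (if (i:ℕ) = j - 2 then _ else _) = b i
    rw [if_pos h]
    show (if (i:ℕ) = j - 2 then b i else _) = b i
    rw [if_pos h]
  · show (if (i:ℕ) = j - 2 then _ else _) = b i
    rw [if_neg h]
    rw [dif_pos hj]
    show (if ((⟨j-2,hj⟩ : Fin (n-1)) : ℕ) = j - 2 then b ⟨j-2,hj⟩ else _)
        - (if (i:ℕ) = j - 2 then b i else (if h3 : j - 2 < n - 1 then b ⟨j-2,h3⟩ else 0) - b i)
        = b i
    rw [if_pos (rfl : ((⟨j-2,hj⟩ : Fin (n-1)) : ℕ) = j - 2), if_neg h, dif_pos hj]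
    ring

theorem phiLin_det_abs (j : ℕ) (hj : j - 2 < n - 1) :
    |LinearMap.det (phiLin (n := n) j)| = 1 := by
  have hcomp : (phiLin (n := n) j).comp (phiLin (n := n) j) = LinearMap.id := by
    apply LinearMap.ext
    intro b
    exact phiFun_invol j hj b
  have hd : LinearMap.det (phiLin (n := n) j) * LinearMap.det (phiLin (n := n) j) = 1 := by
    rw [← LinearMap.det_comp, hcomp, LinearMap.det_id]
  rcases mul_self_eq_one_iff.1 hd with h | h <;> rw [h] <;> norm_num

end Aux
section Measure2

open Finset MeasureTheory

variable {n : ℕ} {y : ℕ → ℝ}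

theorem Aco_one (a : Fin (n - 1) → ℝ) : Aco n a 1 = 0 := by
  rw [Aco, dif_neg (by omega)]

theorem phiFun_apply_eq (j : ℕ) (b : Fin (n-1) → ℝ) (i : Fin (n-1))
    (h : (i:ℕ) = j - 2) : phiFun (n := n) j b i = b i := if_pos h

theorem phiFun_apply_ne (j : ℕ) (hjlt : j - 2 < n - 1) (b : Fin (n-1) → ℝ) (i : Fin (n-1))
    (h : ¬((i:ℕ) = j - 2)) : phiFun (n := n) j b i = b ⟨j-2,hjlt⟩ - b i := by
  show (if (i:ℕ) = j - 2 then b i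
    else (if h2 : j - 2 < n - 1 then b ⟨j-2,h2⟩ else 0) - b i) = _
  rw [if_neg h, dif_pos hjlt]

theorem Rset_one_eq (hn : 2 ≤ n) (hy : ∀ m, 1 ≤ m → m ≤ n → 0 < y m) :
    Rset n y 1 = Set.pi Set.univ fun i : Fin (n - 1) => Set.Icc (-(y ((i : ℕ) + 2))) 0 := by
  ext a
  constructor
  · intro ha i _
    have hi : (i : ℕ) < n - 1 := i.2
    have h := ha ((i : ℕ) + 2) (by omega) (by omega)
    rw [Aco_one, Aco_apply a _ (by omega) (by omega)] at h
    rw [show ((⟨(i:ℕ)+2-2, by omega⟩ : Fin (n-1))) = i from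
      Fin.ext (show (i:ℕ)+2-2 = (i:ℕ) by omega)] at h
    exact ⟨by linarith [h.2], h.1⟩
  · intro ha k hk1 hkn
    rw [Aco_one]
    rcases Nat.lt_or_ge k 2 with h2 | h2
    · have : k = 1 := by omega
      subst this
      rw [Aco_one]
      exact ⟨le_refl 0, by linarith [hy 1 (by omega) (by omega)]⟩
    · rw [Aco_apply a k h2 hkn]
      have hb := ha ⟨k - 2, by omega⟩ (Set.mem_univ _)
      simp only [Set.mem_Icc] at hb
      rw [show (((⟨k-2, by omega⟩ : Fin (n-1)) : ℕ)) + 2 = k by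
        show k - 2 + 2 = k; omega] at hb
      exact ⟨hb.2, by linarith [hb.1]⟩

theorem Rset_eq_image (hn : 2 ≤ n) (hy : ∀ m, 1 ≤ m → m ≤ n → 0 < y m)
    (j : ℕ) (hj2 : 2 ≤ j) (hjn : j ≤ n) :
    Rset n y j = phiFun (n := n) j ''
      (Set.pi Set.univ fun i : Fin (n - 1) =>
        Set.Icc 0 (if (i : ℕ) + 2 = j then y 1 else y ((i : ℕ) + 2))) := by
  have hjlt : j - 2 < n - 1 := by omega
  have hAj : ∀ a : Fin (n - 1) → ℝ, Aco n a j = a ⟨j - 2, hjlt⟩ := fun a =>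
    Aco_apply a j hj2 hjn
  ext a
  constructor
  · intro ha
    refine ⟨phiFun (n := n) j a, ?_, phiFun_invol j hjlt a⟩
    intro i _
    have hi : (i : ℕ) < n - 1 := i.2
    by_cases h : (i : ℕ) = j - 2
    · have hieq : i = ⟨j - 2, hjlt⟩ := Fin.ext h
      have h1 := ha 1 (le_refl 1) (by omega)
      rw [Aco_one, hAj] at h1
      show phiFun (n := n) j a i ∈ Set.Icc 0 (if (i:ℕ) + 2 = j then y 1 else y ((i:ℕ)+2))
      rw [if_pos (show (i : ℕ) + 2 = j by omega), phiFun_apply_eq j a i h, hieq]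
      exact ⟨h1.1, by linarith [h1.2]⟩
    · have hk := ha ((i : ℕ) + 2) (by omega) (by omega)
      rw [hAj, Aco_apply a _ (by omega) (by omega)] at hk
      rw [show ((⟨(i:ℕ)+2-2, by omega⟩ : Fin (n-1))) = i from
        Fin.ext (show (i:ℕ)+2-2 = (i:ℕ) by omega)] at hk
      show phiFun (n := n) j a i ∈ Set.Icc 0 (if (i:ℕ) + 2 = j then y 1 else y ((i:ℕ)+2))
      rw [if_neg (show ¬((i : ℕ) + 2 = j) by omega), phiFun_apply_ne j hjlt a i h]
      exact ⟨by linarith [hk.1], by linarith [hk.2]⟩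
  · rintro ⟨b, hb, rfl⟩
    have hc := hb ⟨j - 2, hjlt⟩ (Set.mem_univ _)
    simp only [Set.mem_Icc] at hc
    rw [if_pos (show ((⟨j-2, hjlt⟩ : Fin (n-1)) : ℕ) + 2 = j by
      show j - 2 + 2 = j; omega)] at hc
    have hphij : Aco n (phiFun (n := n) j b) j = b ⟨j - 2, hjlt⟩ := by
      rw [hAj, phiFun_apply_eq j b _ (rfl : ((⟨j-2,hjlt⟩ : Fin (n-1)) : ℕ) = j - 2)]
    intro k hk1 hkn
    rcases Nat.lt_or_ge k 2 with h2 | h2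
    · have : k = 1 := by omega
      subst this
      rw [Aco_one, hphij]
      exact ⟨hc.1, by linarith [hc.2]⟩
    · by_cases hkj : k = j
      · subst hkj
        rw [hphij]
        exact ⟨le_of_eq (hphij.symm ▸ hphij), by linarith [hy k (by omega) hkn]⟩
      · have hklt : k - 2 < n - 1 := by omega
        have hAk : Aco n (phiFun (n := n) j b) k = b ⟨j-2, hjlt⟩ - b ⟨k-2, hklt⟩ := by
          rw [Aco_apply _ k h2 hkn, phiFun_apply_ne j hjlt b _
            (show ¬(((⟨k-2, hklt⟩ : Fin (n-1)) : ℕ) = j - 2) by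
              show ¬(k - 2 = j - 2); omega)]
        have hbk := hb ⟨k - 2, hklt⟩ (Set.mem_univ _)
        simp only [Set.mem_Icc] at hbk
        rw [if_neg (show ¬(((⟨k-2, hklt⟩ : Fin (n-1)) : ℕ) + 2 = j) by
          show ¬(k - 2 + 2 = j); omega)] at hbk
        rw [show (((⟨k-2, hklt⟩ : Fin (n-1)) : ℕ)) + 2 = k by
          show k - 2 + 2 = k; omega] at hbk
        rw [hAk, hphij]
        exact ⟨by linarith [hbk.1], by linarith [hbk.2]⟩

theorem measurable_Aco (k : ℕ) : Measurable fun a : Fin (n - 1) → ℝ => Aco n a k := by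
  unfold Aco
  split
  · exact measurable_pi_apply _
  · exact measurable_const

theorem measurableSet_Rset (j : ℕ) : MeasurableSet (Rset n y j) := by
  have : Rset n y j = ⋂ (k : ℕ) (_ : 1 ≤ k) (_ : k ≤ n),
      ({a : Fin (n-1) → ℝ | Aco n a k ≤ Aco n a j} ∩
       {a : Fin (n-1) → ℝ | Aco n a j - y k ≤ Aco n a k}) := by
    ext a
    simp only [Set.mem_iInter, Set.mem_inter_iff, Set.mem_setOf_eq, Rset, Set.mem_setOf_eq]
  rw [this]
  refine MeasurableSet.iInter fun k => MeasurableSet.iInter fun _ =>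
    MeasurableSet.iInter fun _ => MeasurableSet.inter ?_ ?_
  · exact measurableSet_le (measurable_Aco k) (measurable_Aco j)
  · exact measurableSet_le ((measurable_Aco j).sub measurable_const) (measurable_Aco k)

noncomputable def acoLin (n : ℕ) (k : ℕ) : (Fin (n - 1) → ℝ) →ₗ[ℝ] ℝ :=
  if h : 2 ≤ k ∧ k ≤ n then LinearMap.proj ⟨k - 2, by omega⟩ else 0

theorem acoLin_apply (a : Fin (n - 1) → ℝ) (k : ℕ) : acoLin n k a = Aco n a k := by
  unfold acoLin Aco
  split <;> rfl

theorem vol_eq_zero_of_Aco_eq (hn : 2 ≤ n) (p q : ℕ) (hp1 : 1 ≤ p) (hpn : p ≤ n)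
    (hq1 : 1 ≤ q) (hqn : q ≤ n) (hp2 : 2 ≤ p) (hne : p ≠ q) :
    volume {a : Fin (n - 1) → ℝ | Aco n a p = Aco n a q} = 0 := by
  set L : (Fin (n - 1) → ℝ) →ₗ[ℝ] ℝ := acoLin n p - acoLin n q with hL
  have hset : {a : Fin (n - 1) → ℝ | Aco n a p = Aco n a q}
      = (LinearMap.ker L : Set (Fin (n - 1) → ℝ)) := by
    ext a
    simp only [Set.mem_setOf_eq, SetLike.mem_coe, LinearMap.mem_ker, hL,
      LinearMap.sub_apply, acoLin_apply, sub_eq_zero]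
  rw [hset]
  apply Measure.addHaar_submodule
  intro htop
  have hzero : L = 0 := LinearMap.ker_eq_top.mp htop
  have hwit : L (Pi.single (⟨p - 2, by omega⟩ : Fin (n - 1)) (1 : ℝ)) = 1 := by
    rw [hL]
    simp only [LinearMap.sub_apply, acoLin_apply]
    rw [Aco_apply _ p hp2 hpn, Pi.single_eq_same]
    rcases Nat.lt_or_ge q 2 with h2 | h2
    · rw [show Aco n (Pi.single (⟨p - 2, by omega⟩ : Fin (n - 1)) (1:ℝ)) q = 0 from
        by rw [Aco, dif_neg (by omega)]]
      ring
    · rw [Aco_apply _ q h2 hqn, Pi.single_eq_of_ne (by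
        intro hcon
        have : q - 2 = p - 2 := congrArg Fin.val hcon
        omega) 1]
      ring
  rw [hzero] at hwit
  simp at hwit

theorem vol_Rset_inter (hn : 2 ≤ n) (p q : ℕ) (hp : p ∈ Finset.Icc 1 n)
    (hq : q ∈ Finset.Icc 1 n) (hne : p ≠ q) :
    volume (Rset n y p ∩ Rset n y q) = 0 := by
  simp only [Finset.mem_Icc] at hp hq
  have hsub : Rset n y p ∩ Rset n y q ⊆ {a | Aco n a p = Aco n a q} := by
    rintro a ⟨hap, haq⟩
    have h1 := (hap q hq.1 hq.2).1
    have h2 := (haq p hp.1 hp.2).1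
    exact le_antisymm h2 h1
  apply measure_mono_null hsub
  rcases Nat.lt_or_ge p 2 with h2 | h2
  · have hq2 : 2 ≤ q := by omega
    have : {a : Fin (n-1) → ℝ | Aco n a p = Aco n a q}
        = {a : Fin (n-1) → ℝ | Aco n a q = Aco n a p} := by
      ext a; simp only [Set.mem_setOf_eq, eq_comm]
    rw [this]
    exact vol_eq_zero_of_Aco_eq hn q p hq.1 hq.2 hp.1 hp.2 hq2 (Ne.symm hne)
  · exact vol_eq_zero_of_Aco_eq hn p q hp.1 hp.2 hq.1 hq.2 h2 hne

theorem prod_reindex (hn : 2 ≤ n) (j : ℕ) (hj1 : 1 ≤ j) (hjn : j ≤ n) :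
    ∏ i : Fin (n - 1), (if (i : ℕ) + 2 = j then y 1 else y ((i : ℕ) + 2))
      = ∏ m ∈ (Finset.Icc 1 n).erase j, y m := by
  have h1 : ∏ i : Fin (n - 1), (if (i : ℕ) + 2 = j then y 1 else y ((i : ℕ) + 2))
      = ∏ v ∈ Finset.range (n - 1), (if v + 2 = j then y 1 else y (v + 2)) :=
    Fin.prod_univ_eq_prod_range (fun v => if v + 2 = j then y 1 else y (v + 2)) (n - 1)
  have h2 : ∏ v ∈ Finset.range (n - 1), (if v + 2 = j then y 1 else y (v + 2))
      = ∏ m ∈ Finset.Icc 2 n, (if m = j then y 1 else y m) := by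
    apply Finset.prod_nbij' (i := fun v => v + 2) (j := fun m => m - 2)
    · intro v hv
      simp only [Finset.mem_range] at hv
      simp only [Finset.mem_Icc]
      omega
    · intro m hm
      simp only [Finset.mem_Icc] at hm
      simp only [Finset.mem_range]
      omega
    · intro v hv
      omega
    · intro m hm
      simp only [Finset.mem_Icc] at hm
      omega
    · intro v hv
      rfl
  rw [h1, h2]
  rcases Nat.lt_or_ge j 2 with hlt | hge
  · have hj : j = 1 := by omega
    subst hj
    have he : (Finset.Icc 1 n).erase 1 = Finset.Icc 2 n := by
      ext m
      simp only [Finset.mem_erase, Finset.mem_Icc]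
      omega
    rw [he]
    apply Finset.prod_congr rfl
    intro m hm
    simp only [Finset.mem_Icc] at hm
    rw [if_neg (by omega)]
  · have hjm : j ∈ Finset.Icc 2 n := by simp only [Finset.mem_Icc]; omega
    rw [← Finset.insert_erase hjm,
      Finset.prod_insert (Finset.notMem_erase _ _), if_pos rfl]
    have he : (Finset.Icc 1 n).erase j = insert 1 ((Finset.Icc 2 n).erase j) := by
      ext m
      simp only [Finset.mem_erase, Finset.mem_Icc, Finset.mem_insert]
      omega
    rw [he, Finset.prod_insert (by
      simp only [Finset.mem_erase, Finset.mem_Icc]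
      omega)]
    congr 1
    apply Finset.prod_congr rfl
    intro m hm
    simp only [Finset.mem_erase, Finset.mem_Icc] at hm
    rw [if_neg hm.1]

theorem vol_Rset (hn : 2 ≤ n) (hy : ∀ m, 1 ≤ m → m ≤ n → 0 < y m)
    (j : ℕ) (hj1 : 1 ≤ j) (hjn : j ≤ n) :
    volume (Rset n y j) = ENNReal.ofReal (∏ m ∈ (Finset.Icc 1 n).erase j, y m) := by
  have hnn : ∀ i : Fin (n - 1), (0:ℝ) ≤ if (i : ℕ) + 2 = j then y 1 else y ((i : ℕ) + 2) := by
    intro i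
    have hi : (i : ℕ) < n - 1 := i.2
    split
    · exact (hy 1 (by omega) (by omega)).le
    · exact (hy ((i:ℕ)+2) (by omega) (by omega)).le
  rw [← prod_reindex hn j hj1 hjn,
    ENNReal.ofReal_prod_of_nonneg (fun i _ => hnn i)]
  rcases Nat.lt_or_ge j 2 with h2 | h2
  · have hj : j = 1 := by omega
    subst hj
    rw [Rset_one_eq hn hy, volume_pi_pi]
    apply Finset.prod_congr rfl
    intro i _
    rw [Real.volume_Icc, if_neg (by omega)]
    norm_num
  · rw [Rset_eq_image hn hy j h2 hjn]
    have hphi : phiFun (n := n) j = ⇑(phiLin (n := n) j) := rfl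
    rw [hphi, Measure.addHaar_image_linearMap, phiLin_det_abs j (by omega),
      ENNReal.ofReal_one, one_mul, volume_pi_pi]
    apply Finset.prod_congr rfl
    intro i _
    rw [Real.volume_Icc]
    norm_num

end Measure2
section Final

open Finset MeasureTheory

variable {n : ℕ} {y : ℕ → ℝ}

noncomputable def Dmat (n : ℕ) : Matrix (Fin (n - 1)) (Fin (n - 1)) ℝ :=
  Matrix.of fun i r => (if r = i then (1:ℝ) else 0) - (if (r : ℕ) + 1 = (i : ℕ) then 1 else 0)

theorem Dmat_det : (Dmat n).det = 1 := by
  rw [Matrix.det_of_lowerTriangular (Dmat n) (by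
    intro i r hir
    have hlt : i < r := hir
    show (if r = i then (1:ℝ) else 0) - (if (r : ℕ) + 1 = (i : ℕ) then 1 else 0) = 0
    have hv : (i : ℕ) < (r : ℕ) := hlt
    rw [if_neg (by intro h; subst h; omega), if_neg (by omega)]
    ring)]
  apply Finset.prod_eq_one
  intro i _
  show (if i = i then (1:ℝ) else 0) - (if (i : ℕ) + 1 = (i : ℕ) then 1 else 0) = 1
  rw [if_pos rfl, if_neg (by omega)]
  ring

noncomputable def DmapLin (n : ℕ) : (Fin (n - 1) → ℝ) →ₗ[ℝ] (Fin (n - 1) → ℝ) :=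
  Matrix.toLin' (Dmat n)

theorem DmapLin_eq (hn : 2 ≤ n) : ⇑(DmapLin n) = Dmap n := by
  funext a i
  have hi : (i : ℕ) < n - 1 := i.2
  rw [DmapLin, Matrix.toLin'_apply]
  show (Dmat n).mulVec a i = Aco n a ((i : ℕ) + 2) - Aco n a ((i : ℕ) + 1)
  rw [Matrix.mulVec, dotProduct]
  have hsum : ∀ r : Fin (n - 1), Dmat n i r * a r
      = (if r = i then a r else 0) - (if (r : ℕ) + 1 = (i : ℕ) then a r else 0) := by
    intro r
    show ((if r = i then (1:ℝ) else 0) - if (r : ℕ) + 1 = (i : ℕ) then 1 else 0) * a r = _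
    by_cases h1 : r = i
    · subst h1
      rw [if_pos rfl, if_pos rfl, if_neg (by omega), if_neg (by omega)]
      ring
    · rw [if_neg h1, if_neg h1]
      by_cases h2 : (r : ℕ) + 1 = (i : ℕ)
      · rw [if_pos h2, if_pos h2]; ring
      · rw [if_neg h2, if_neg h2]; ring
  rw [Finset.sum_congr rfl fun r _ => hsum r, Finset.sum_sub_distrib]
  have hA : ∑ r : Fin (n - 1), (if r = i then a r else 0) = a i := by
    rw [Finset.sum_ite_eq' Finset.univ i a]
    simp
  have hB : ∑ r : Fin (n - 1), (if (r : ℕ) + 1 = (i : ℕ) then a r else 0)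
      = if 1 ≤ (i : ℕ) then (if h : 1 ≤ (i : ℕ) then a ⟨(i : ℕ) - 1, by omega⟩ else 0) else 0 := by
    by_cases hI : 1 ≤ (i : ℕ)
    · rw [if_pos hI, dif_pos hI]
      have h0 : ∀ r : Fin (n - 1), (if (r : ℕ) + 1 = (i : ℕ) then a r else 0)
          = if r = ⟨(i : ℕ) - 1, by omega⟩ then a r else 0 := by
        intro r
        by_cases h : r = (⟨(i : ℕ) - 1, by omega⟩ : Fin (n - 1))
        · rw [if_pos h, if_pos (by subst h; show (i : ℕ) - 1 + 1 = (i : ℕ); omega)]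
        · rw [if_neg h, if_neg (fun hcon => h (Fin.ext (show (r : ℕ) = (i : ℕ) - 1 by omega)))]
      rw [Finset.sum_congr rfl fun r _ => h0 r, Finset.sum_ite_eq' Finset.univ _ a]
      simp
    · rw [if_neg hI]
      apply Finset.sum_eq_zero
      intro r _
      rw [if_neg (by omega)]
  have hAco2 : Aco n a ((i : ℕ) + 2) = a i := by
    rw [Aco_apply a _ (by omega) (by omega)]
    exact congrArg a (Fin.ext (show (i : ℕ) + 2 - 2 = (i : ℕ) by omega))
  have hAco1 : Aco n a ((i : ℕ) + 1)
      = if h : 1 ≤ (i : ℕ) then a ⟨(i : ℕ) - 1, by omega⟩ else 0 := by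
    by_cases hI : 1 ≤ (i : ℕ)
    · rw [dif_pos hI, Aco_apply a _ (by omega) (by omega)]
      exact congrArg a (Fin.ext (show (i : ℕ) + 1 - 2 = (i : ℕ) - 1 by omega))
    · rw [dif_neg hI, Aco, dif_neg (by omega)]
  rw [hA, hB, hAco2, hAco1]
  by_cases hI : 1 ≤ (i : ℕ)
  · rw [if_pos hI]
  · rw [if_neg hI, dif_neg hI]

theorem DmapLin_det : LinearMap.det (DmapLin n) = 1 := by
  rw [DmapLin, LinearMap.det_toLin', Dmat_det]

end Final

open Finset MeasureTheory in
private theorem statement13_aux (n : ℕ) (hn : 2 ≤ n) (y : ℕ → ℝ)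
    (hy : ∀ m, 1 ≤ m → m ≤ n → 0 < y m) :
    volume (polyP n y) =
      ENNReal.ofReal (∑ j ∈ Icc 1 n, ∏ i ∈ (Icc 1 n).erase j, y i) := by
  have hIm : polyP n y = (fun v => wVec n y + v) ''
      (⇑(DmapLin n) '' (⋃ j ∈ Finset.Icc 1 n, Rset n y j)) := by
    rw [polyP_eq_image hy, Pa_eq_union hn, DmapLin_eq hn, Set.image_image]
    rfl
  rw [hIm]
  have ht : ∀ T : Set (Fin (n - 1) → ℝ),
      (fun v => wVec n y + v) '' T = (fun v => -wVec n y + v) ⁻¹' T := by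
    intro T
    ext v
    simp only [Set.mem_image, Set.mem_preimage]
    constructor
    · rintro ⟨u, hu, rfl⟩
      rwa [neg_add_cancel_left]
    · intro hv
      exact ⟨-wVec n y + v, hv, add_neg_cancel_left _ _⟩
  rw [ht, measure_preimage_add, Measure.addHaar_image_linearMap, DmapLin_det]
  rw [abs_one, ENNReal.ofReal_one, one_mul]
  rw [measure_biUnion_finset₀
    (fun p hp q hq hne =>
      vol_Rset_inter hn p q (Finset.mem_coe.mp hp) (Finset.mem_coe.mp hq) hne)
    (fun j _ => (measurableSet_Rset j).nullMeasurableSet)]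
  have hterm : ∀ j ∈ Finset.Icc 1 n, volume (Rset n y j)
      = ENNReal.ofReal (∏ m ∈ (Finset.Icc 1 n).erase j, y m) := by
    intro j hj
    simp only [Finset.mem_Icc] at hj
    exact vol_Rset hn hy j hj.1 hj.2
  rw [Finset.sum_congr rfl hterm,
    ← ENNReal.ofReal_sum_of_nonneg (fun j hj => Finset.prod_nonneg fun m hm => by
      simp only [Finset.mem_erase, Finset.mem_Icc] at hm
      exact (hy m hm.2.1 hm.2.2).le)]

/-- The Lebesgue volume of `P` in `ℝ^{n−1}` equals
`Σ_{j=1}^{n} y_1 ⋯ y_{j−1} y_{j+1} ⋯ y_n`. -/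
theorem statement13 (n : ℕ) (hn : 2 ≤ n) (y : ℕ → ℝ)
    (hy : ∀ m, 1 ≤ m → m ≤ n → 0 < y m) :
    volume (polyP n y) =
      ENNReal.ofReal (∑ j ∈ Icc 1 n, ∏ i ∈ (Icc 1 n).erase j, y i) :=
  statement13_aux n hn y hy
end

section
/- For each j ∈ {1, …, n}, the Lebesgue volume of the parallelohedron Q_j in ℝ^{n−1} equals Π_{i ≠ j} y_i; equivalently, the absolute value of the determinant of the (n−1) × (n−1) matrix whose columns are the vectors y_i v_i for i ∈ {1, …, n} \ {j} equals y_1 ⋯ y_{j−1} y_{j+1} ⋯ y_n. -/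
open Finset

open MeasureTheory

section
variable (n j : ℕ)

/-- enumeration of `{1,…,n} \ {j}` by `Fin (n-1)` -/
def idxJ (c : ℕ) : ℕ := if c + 1 < j then c + 1 else c + 2

lemma idxJ_mem (hn : 2 ≤ n) (hj1 : 1 ≤ j) (hj2 : j ≤ n) (c : Fin (n-1)) :
    idxJ j (c : ℕ) ∈ (Icc 1 n).erase j := by
  have := c.isLt
  simp only [idxJ, mem_erase, mem_Icc]
  split <;> omega

def invJ (hn : 2 ≤ n) (m : ℕ) : Fin (n-1) :=
  ⟨min (if m < j then m - 1 else m - 2) (n-2), by omega⟩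

lemma invJ_eq (hn : 2 ≤ n) (hj1 : 1 ≤ j) (hj2 : j ≤ n) (m : ℕ)
    (hm : m ∈ (Icc 1 n).erase j) :
    (invJ n j hn m : ℕ) = if m < j then m - 1 else m - 2 := by
  simp only [mem_erase, mem_Icc] at hm
  simp only [invJ]
  split <;> omega

lemma invJ_idxJ (hn : 2 ≤ n) (hj1 : 1 ≤ j) (hj2 : j ≤ n) (c : Fin (n-1)) :
    invJ n j hn (idxJ j (c : ℕ)) = c := by
  have := c.isLt
  apply Fin.ext
  rw [invJ_eq n j hn hj1 hj2 _ (idxJ_mem n j hn hj1 hj2 c)]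
  simp only [idxJ]
  split_ifs <;> omega

lemma idxJ_invJ (hn : 2 ≤ n) (hj1 : 1 ≤ j) (hj2 : j ≤ n) (m : ℕ)
    (hm : m ∈ (Icc 1 n).erase j) :
    idxJ j ((invJ n j hn m : ℕ)) = m := by
  simp only [mem_erase, mem_Icc] at hm
  rw [invJ_eq n j hn hj1 hj2 _ (by simp only [mem_erase, mem_Icc]; omega)]
  simp only [idxJ]
  split_ifs <;> omega

end

def pfJ (n j : ℕ) (hn : 2 ≤ n) : Fin (n-1) → Fin (n-1) :=
  fun c => if h : (c : ℕ) + 1 < j then c else ⟨j + n - 3 - (c : ℕ), by have := c.isLt; omega⟩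

lemma pfJ_val (n j : ℕ) (hn : 2 ≤ n) (c : Fin (n-1)) :
    ((pfJ n j hn c : ℕ)) = if (c:ℕ)+1 < j then (c:ℕ) else j + n - 3 - (c:ℕ) := by
  simp only [pfJ]; split <;> simp

lemma pfJ_inv (n j : ℕ) (hn : 2 ≤ n) (hj1 : 1 ≤ j) (hj2 : j ≤ n) :
    Function.Involutive (pfJ n j hn) := by
  intro c
  have h1 := pfJ_val n j hn c
  have h2 := pfJ_val n j hn (pfJ n j hn c)
  have hc := c.isLt
  have hc2 := (pfJ n j hn c).isLt
  apply Fin.ext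
  split_ifs at h1 h2 <;> omega

lemma absdetJ (n : ℕ) (hn : 2 ≤ n) (y : ℕ → ℝ) (hy : ∀ m, 1 ≤ m → m ≤ n → 0 < y m)
    (j : ℕ) (hj1 : 1 ≤ j) (hj2 : j ≤ n) :
    |(Matrix.of fun (r c : Fin (n - 1)) =>
        (y (idxJ j (c : ℕ)) • stdV n (idxJ j (c : ℕ))) r).det| =
      ∏ i ∈ (Icc 1 n).erase j, y i := by
  set M : Matrix (Fin (n-1)) (Fin (n-1)) ℝ :=
    Matrix.of fun (r c : Fin (n - 1)) =>
        (y (idxJ j (c : ℕ)) • stdV n (idxJ j (c : ℕ))) r with hM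
  have hinv := pfJ_inv n j hn hj1 hj2
  set π : Equiv.Perm (Fin (n-1)) := hinv.toPerm with hπ
  have hdet : (M.submatrix π π).det = M.det := Matrix.det_submatrix_equiv_self π M
  have htri : (M.submatrix ⇑π ⇑π).BlockTriangular id := by
    intro r c hrc
    have hlt : (c : ℕ) < (r : ℕ) := hrc
    have h1 := pfJ_val n j hn r
    have h2 := pfJ_val n j hn c
    have hr := r.isLt
    have hc := c.isLt
    have hpr := (pfJ n j hn r).isLt
    have hpc := (pfJ n j hn c).isLt
    show M (π r) (π c) = 0
    have hπr : π r = pfJ n j hn r := rfl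
    have hπc : π c = pfJ n j hn c := rfl
    rw [hπr, hπc, hM]
    simp only [Matrix.of_apply, Pi.smul_apply, smul_eq_mul, stdV, idxJ]
    split_ifs at h1 h2 ⊢ <;> first | (exfalso; omega) | norm_num
  have hdiag : ∀ c : Fin (n-1), |(M.submatrix ⇑π ⇑π) c c| = y (idxJ j ((pfJ n j hn c : ℕ))) := by
    intro c
    have h2 := pfJ_val n j hn c
    have hc := c.isLt
    have hpc := (pfJ n j hn c).isLt
    have hπc : π c = pfJ n j hn c := rfl
    have key : (M.submatrix ⇑π ⇑π) c c = M (pfJ n j hn c) (pfJ n j hn c) := by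
      rw [Matrix.submatrix_apply, hπc]
    rw [key, hM]
    set b : ℕ := (pfJ n j hn c : ℕ) with hb
    simp only [Matrix.of_apply, Pi.smul_apply, smul_eq_mul, stdV, idxJ]
    by_cases hbj : b + 1 < j
    · rw [if_pos hbj, if_pos rfl, if_neg (by omega)]
      have hpos : 0 < y (b+1) := hy _ (by omega) (by omega)
      rw [sub_zero, mul_one]
      exact abs_of_pos hpos
    · rw [if_neg hbj, if_neg (by omega), if_pos rfl]
      have hpos : 0 < y (b+2) := hy _ (by omega) (by omega)
      rw [zero_sub, mul_neg, mul_one, abs_neg]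
      exact abs_of_pos hpos
  calc |M.det| = |(M.submatrix ⇑π ⇑π).det| := by rw [hdet]
    _ = |∏ c, (M.submatrix ⇑π ⇑π) c c| := by rw [Matrix.det_of_upperTriangular htri]
    _ = ∏ c, |(M.submatrix ⇑π ⇑π) c c| := Finset.abs_prod _ _
    _ = ∏ c, y (idxJ j ((pfJ n j hn c : ℕ))) := by simp only [hdiag]
    _ = ∏ c : Fin (n-1), y (idxJ j (c : ℕ)) := by
        have := Equiv.prod_comp π (fun c : Fin (n-1) => y (idxJ j (c : ℕ)))
        exact this
    _ = ∏ i ∈ (Icc 1 n).erase j, y i := by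
        refine Finset.prod_nbij' (fun c => idxJ j (c : ℕ)) (invJ n j hn) ?_ ?_ ?_ ?_ ?_
        · exact fun c _ => idxJ_mem n j hn hj1 hj2 c
        · exact fun m _ => Finset.mem_univ _
        · exact fun c _ => invJ_idxJ n j hn hj1 hj2 c
        · exact fun m hm => idxJ_invJ n j hn hj1 hj2 m hm
        · exact fun c _ => rfl

lemma sumJ (n : ℕ) (hn : 2 ≤ n) (y : ℕ → ℝ) (j : ℕ) (hj1 : 1 ≤ j) (hj2 : j ≤ n)
    (t : ℕ → ℝ) :
    (∑ m ∈ (Icc 1 n).erase j, (t m * y m) • stdV n m)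
      = Matrix.toLin' (Matrix.of fun (r c : Fin (n - 1)) =>
          (y (idxJ j (c : ℕ)) • stdV n (idxJ j (c : ℕ))) r)
          (fun c => t (idxJ j (c : ℕ))) := by
  rw [Matrix.toLin'_apply]
  funext r
  rw [Finset.sum_apply]
  have : (Matrix.of fun (r c : Fin (n - 1)) =>
          (y (idxJ j (c : ℕ)) • stdV n (idxJ j (c : ℕ))) r).mulVec
          (fun c => t (idxJ j (c : ℕ))) r
      = ∑ c : Fin (n-1), (y (idxJ j (c : ℕ)) * stdV n (idxJ j (c : ℕ)) r) * t (idxJ j (c : ℕ)) := by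
    simp [Matrix.mulVec, dotProduct, smul_eq_mul]
  rw [this]
  refine Finset.sum_nbij' (fun m => invJ n j hn m) (fun c => idxJ j ((c : Fin (n-1)) : ℕ)) ?_ ?_ ?_ ?_ ?_
  · exact fun m _ => Finset.mem_univ _
  · exact fun c _ => idxJ_mem n j hn hj1 hj2 c
  · exact fun m hm => idxJ_invJ n j hn hj1 hj2 m hm
  · exact fun c _ => invJ_idxJ n j hn hj1 hj2 c
  · intro m hm
    rw [idxJ_invJ n j hn hj1 hj2 m hm]
    simp only [Pi.smul_apply, smul_eq_mul]
    ring

lemma setEqJ (n : ℕ) (hn : 2 ≤ n) (y : ℕ → ℝ) (j : ℕ) (hj1 : 1 ≤ j) (hj2 : j ≤ n) :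
    polyQj n y j = (fun v => wVec n y + v) ''
      (⇑(Matrix.toLin' (Matrix.of fun (r c : Fin (n - 1)) =>
          (y (idxJ j (c : ℕ)) • stdV n (idxJ j (c : ℕ))) r)) ''
        Set.Icc (0 : Fin (n-1) → ℝ) 1) := by
  ext x
  constructor
  · rintro ⟨t, ht, rfl⟩
    refine ⟨_, ⟨fun c => t (idxJ j (c : ℕ)), ?_, rfl⟩, ?_⟩
    · rw [Set.mem_Icc]
      exact ⟨fun c => (ht _).1, fun c => (ht _).2⟩
    · rw [← sumJ n hn y j hj1 hj2 t]
  · rintro ⟨v, ⟨u, hu, rfl⟩, rfl⟩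
    rw [Set.mem_Icc] at hu
    refine ⟨fun m => if m ∈ (Icc 1 n).erase j then u (invJ n j hn m) else 0, ?_, ?_⟩
    · intro m
      by_cases h : m ∈ (Icc 1 n).erase j
      · simp only [if_pos h]
        exact ⟨hu.1 _, hu.2 _⟩
      · simp only [if_neg h]
        norm_num
    · have hue : (fun c : Fin (n-1) =>
          if idxJ j (c : ℕ) ∈ (Icc 1 n).erase j then u (invJ n j hn (idxJ j (c : ℕ))) else 0) = u := by
        funext c
        rw [if_pos (idxJ_mem n j hn hj1 hj2 c), invJ_idxJ n j hn hj1 hj2 c]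
      rw [sumJ n hn y j hj1 hj2, hue]

lemma volQj (n : ℕ) (hn : 2 ≤ n) (y : ℕ → ℝ) (hy : ∀ m, 1 ≤ m → m ≤ n → 0 < y m)
    (j : ℕ) (hj1 : 1 ≤ j) (hj2 : j ≤ n) :
    volume (polyQj n y j) = ENNReal.ofReal (∏ i ∈ (Icc 1 n).erase j, y i) := by
  rw [setEqJ n hn y j hj1 hj2, Set.image_add_left, measure_preimage_add,
      Measure.addHaar_image_linearMap, LinearMap.det_toLin', Real.volume_Icc_pi]
  simp only [Pi.one_apply, Pi.zero_apply, sub_zero, ENNReal.ofReal_one, Finset.prod_const_one,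
    mul_one]
  rw [absdetJ n hn y hy j hj1 hj2]


/-- For each `j ∈ {1, …, n}`, the Lebesgue volume of `Q_j` equals `Π_{i ≠ j} y_i`;
equivalently, the `(n−1) × (n−1)` matrix whose columns are the vectors `y_i v_i`,
`i ∈ {1,…,n} \ {j}` (listed in increasing order of `i`), has `|det| = Π_{i ≠ j} y_i`. -/
theorem statement14 (n : ℕ) (hn : 2 ≤ n) (y : ℕ → ℝ)
    (hy : ∀ m, 1 ≤ m → m ≤ n → 0 < y m)
    (j : ℕ) (hj : j ∈ Icc 1 n) :
    volume (polyQj n y j) =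
      ENNReal.ofReal (∏ i ∈ (Icc 1 n).erase j, y i) ∧
    |(Matrix.of fun (r c : Fin (n - 1)) =>
        (y (if (c : ℕ) + 1 < j then (c : ℕ) + 1 else (c : ℕ) + 2) •
          stdV n (if (c : ℕ) + 1 < j then (c : ℕ) + 1 else (c : ℕ) + 2)) r).det| =
      ∏ i ∈ (Icc 1 n).erase j, y i := by
  rw [mem_Icc] at hj
  exact ⟨volQj n hn y hy j hj.1 hj.2, absdetJ n hn y hy j hj.1 hj.2⟩
end

section
/- Fix j_0 ∈ {1, …, n}. A point x ∈ ℝ^{n−1} belongs to Q_{j_0} if and only if: for every j with 1 ≤ j < j_0, y_{j+1} + ⋯ + y_{j_0} ≤ x_j + ⋯ + x_{j_0 − 1} ≤ y_j + ⋯ + y_{j_0}; and for every k with j_0 < k ≤ n, y_{j_0 + 1} + ⋯ + y_{k−1} ≤ x_{j_0} + ⋯ + x_{k−1} ≤ y_{j_0 + 1} + ⋯ + y_k. -/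
open Finset

private lemma sum_Icc_peel_left (f : ℕ → ℝ) (a b : ℕ) (h : a ≤ b) :
    ∑ m ∈ Icc a b, f m = f a + ∑ m ∈ Icc (a + 1) b, f m := by
  rw [← Finset.Ioc_insert_left h, Finset.sum_insert (by simp), Finset.Icc_add_one_left_eq_Ioc]

private lemma coordEval (n j₀ : ℕ) (y t : ℕ → ℝ) (i : Fin (n - 1)) :
    (wVec n y + ∑ m ∈ (Icc 1 n).erase j₀, (t m * y m) • stdV n m) i =
      y ((i : ℕ) + 2) + (if (i : ℕ) + 1 = j₀ then 0 else t ((i : ℕ) + 1) * y ((i : ℕ) + 1))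
        - (if (i : ℕ) + 2 = j₀ then 0 else t ((i : ℕ) + 2) * y ((i : ℕ) + 2)) := by
  have hi : (i : ℕ) < n - 1 := i.isLt
  have h1 : (i : ℕ) + 1 ∈ (Icc 1 n) := by rw [Finset.mem_Icc]; omega
  have h2 : (i : ℕ) + 2 ∈ (Icc 1 n) := by rw [Finset.mem_Icc]; omega
  simp only [Pi.add_apply, Finset.sum_apply, Pi.smul_apply, stdV, wVec, smul_eq_mul,
    mul_sub, mul_ite, mul_one, mul_zero, Finset.sum_sub_distrib,
    Finset.sum_ite_eq, Finset.mem_erase, h1, h2, and_true]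
  by_cases hc1 : (i : ℕ) + 1 = j₀ <;> by_cases hc2 : (i : ℕ) + 2 = j₀ <;>
    simp [hc1, hc2] <;> ring

private lemma telescope (n : ℕ) (x : Fin (n - 1) → ℝ) (y A : ℕ → ℝ)
    (hcoord : ∀ m, 1 ≤ m → m ≤ n - 1 → coord n x m = y (m + 1) + A m - A (m + 1))
    (j : ℕ) (hj : 1 ≤ j) : ∀ k, j < k → k ≤ n →
    ∑ m ∈ Icc j (k - 1), coord n x m = (∑ m ∈ Icc (j + 1) k, y m) + A j - A k := by
  intro k hjk
  induction k, hjk using Nat.le_induction with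
  | base =>
    intro hk
    simp only [Nat.succ_eq_add_one, Nat.add_sub_cancel, Finset.Icc_self, Finset.sum_singleton]
    rw [hcoord j hj (by omega)]
  | succ k hk' ih =>
    intro hk
    have hk1 : k - 1 + 1 = k := by omega
    simp only [Nat.add_sub_cancel]
    calc ∑ m ∈ Icc j k, coord n x m
        = (∑ m ∈ Icc j (k - 1), coord n x m) + coord n x k := by
          rw [← hk1, Finset.sum_Icc_succ_top (by omega)]; rw [hk1]
      _ = (∑ m ∈ Icc (j + 1) k, y m) + A j - A k + coord n x k := by
          rw [ih (by omega)]
      _ = (∑ m ∈ Icc (j + 1) (k + 1), y m) + A j - A (k + 1) := by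
          rw [Finset.sum_Icc_succ_top (by omega : j + 1 ≤ k + 1),
            hcoord k (by omega) (by omega)]
          ring

private noncomputable def tchoice (n j₀ : ℕ) (y : ℕ → ℝ) (x : Fin (n - 1) → ℝ) : ℕ → ℝ :=
  fun m =>
    if 1 ≤ m ∧ m < j₀ then
      ((∑ p ∈ Icc m (j₀ - 1), coord n x p) - ∑ p ∈ Icc (m + 1) j₀, y p) / y m
    else if j₀ < m ∧ m ≤ n then
      ((∑ p ∈ Icc (j₀ + 1) m, y p) - ∑ p ∈ Icc j₀ (m - 1), coord n x p) / y m
    else 0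

/-- Fix `j_0 ∈ {1, …, n}`.  A point `x ∈ ℝ^{n−1}` belongs to `Q_{j_0}` iff:
for every `1 ≤ j < j_0`, `y_{j+1} + ⋯ + y_{j_0} ≤ x_j + ⋯ + x_{j_0−1} ≤ y_j + ⋯ + y_{j_0}`;
and for every `j_0 < k ≤ n`,
`y_{j_0+1} + ⋯ + y_{k−1} ≤ x_{j_0} + ⋯ + x_{k−1} ≤ y_{j_0+1} + ⋯ + y_k`. -/
theorem statement16 (n : ℕ) (hn : 2 ≤ n) (y : ℕ → ℝ)
    (hy : ∀ m, 1 ≤ m → m ≤ n → 0 < y m)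
    (j₀ : ℕ) (hj₀ : j₀ ∈ Icc 1 n) (x : Fin (n - 1) → ℝ) :
    x ∈ polyQj n y j₀ ↔
      ((∀ j, 1 ≤ j → j < j₀ →
          (∑ m ∈ Icc (j + 1) j₀, y m) ≤ (∑ m ∈ Icc j (j₀ - 1), coord n x m) ∧
          (∑ m ∈ Icc j (j₀ - 1), coord n x m) ≤ (∑ m ∈ Icc j j₀, y m)) ∧
       (∀ k, j₀ < k → k ≤ n →
          (∑ m ∈ Icc (j₀ + 1) (k - 1), y m) ≤ (∑ m ∈ Icc j₀ (k - 1), coord n x m) ∧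
          (∑ m ∈ Icc j₀ (k - 1), coord n x m) ≤ (∑ m ∈ Icc (j₀ + 1) k, y m))) := by
  rw [Finset.mem_Icc] at hj₀
  obtain ⟨hj₀1, hj₀n⟩ := hj₀
  constructor
  · rintro ⟨t, ht, hx⟩
    set A : ℕ → ℝ := fun m => if m = j₀ then 0 else t m * y m with hA_def
    have hAj₀ : A j₀ = 0 := by simp [hA_def]
    have hA : ∀ m, 1 ≤ m → m ≤ n → 0 ≤ A m ∧ A m ≤ y m := by
      intro m hm1 hm2
      by_cases hm : m = j₀
      · simp [hA_def, hm, (hy j₀ hj₀1 hj₀n).le]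
      · simp only [hA_def, if_neg hm]
        have hym := hy m hm1 hm2
        constructor
        · exact mul_nonneg (ht m).1 hym.le
        · calc t m * y m ≤ 1 * y m := by nlinarith [(ht m).2]
            _ = y m := one_mul _
    have hcoord : ∀ m, 1 ≤ m → m ≤ n - 1 → coord n x m = y (m + 1) + A m - A (m + 1) := by
      intro m hm1 hm2
      have hco : coord n x m = x ⟨m - 1, by omega⟩ := by rw [coord, dif_pos ⟨hm1, hm2⟩]
      rw [hco, hx, coordEval]
      simp only [hA_def]
      rw [show m - 1 + 1 = m from by omega, show m - 1 + 2 = m + 1 from by omega]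
    constructor
    · intro j hj hjj₀
      rw [telescope n x y A hcoord j hj j₀ hjj₀ hj₀n, hAj₀,
        sum_Icc_peel_left y j j₀ (by omega)]
      have := hA j hj (by omega)
      constructor <;> linarith [this.1, this.2]
    · intro k hk1 hk2
      rw [telescope n x y A hcoord j₀ hj₀1 k hk1 hk2, hAj₀]
      have hpeel : ∑ m ∈ Icc (j₀ + 1) k, y m
          = (∑ m ∈ Icc (j₀ + 1) (k - 1), y m) + y k := by
        have h := Finset.sum_Icc_succ_top (by omega : j₀ + 1 ≤ k - 1 + 1) y
        rwa [show k - 1 + 1 = k from by omega] at h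
      have := hA k (by omega) hk2
      constructor <;> linarith [this.1, this.2]
  · rintro ⟨H1, H2⟩
    have hty1 : ∀ m, 1 ≤ m → m < j₀ → tchoice n j₀ y x m * y m
        = (∑ p ∈ Icc m (j₀ - 1), coord n x p) - ∑ p ∈ Icc (m + 1) j₀, y p := by
      intro m hm1 hm2
      have hc : 1 ≤ m ∧ m < j₀ := ⟨hm1, hm2⟩
      simp only [tchoice]
      rw [if_pos hc]
      exact div_mul_cancel₀ _ (hy m hm1 (by omega)).ne'
    have hty2 : ∀ m, j₀ < m → m ≤ n → tchoice n j₀ y x m * y m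
        = (∑ p ∈ Icc (j₀ + 1) m, y p) - ∑ p ∈ Icc j₀ (m - 1), coord n x p := by
      intro m hm1 hm2
      have hc : j₀ < m ∧ m ≤ n := ⟨hm1, hm2⟩
      simp only [tchoice]
      rw [if_neg (by omega : ¬(1 ≤ m ∧ m < j₀)), if_pos hc]
      exact div_mul_cancel₀ _ (hy m (by omega) hm2).ne'
    refine ⟨tchoice n j₀ y x, ?_, ?_⟩
    · intro m
      simp only [tchoice]
      split_ifs with hc1 hc2
      · have hym := hy m hc1.1 (by omega)
        have hH := H1 m hc1.1 hc1.2
        have hpeel := sum_Icc_peel_left y m j₀ (by omega)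
        constructor
        · apply div_nonneg _ hym.le; linarith [hH.1]
        · rw [div_le_one hym]; linarith [hH.2]
      · have hym := hy m (by omega) hc2.2
        have hH := H2 m hc2.1 hc2.2
        have hpeel : ∑ p ∈ Icc (j₀ + 1) m, y p
            = (∑ p ∈ Icc (j₀ + 1) (m - 1), y p) + y m := by
          have h := Finset.sum_Icc_succ_top (by omega : j₀ + 1 ≤ m - 1 + 1) y
          rwa [show m - 1 + 1 = m from by omega] at h
        constructor
        · apply div_nonneg _ hym.le; linarith [hH.2]
        · rw [div_le_one hym]; linarith [hH.1]
      · constructor <;> norm_num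
    · funext i
      rw [coordEval]
      have hi : (i : ℕ) < n - 1 := i.isLt
      set m : ℕ := (i : ℕ) + 1 with hm_def
      have hm1 : 1 ≤ m := by omega
      have hm2 : m ≤ n - 1 := by omega
      have hco : coord n x m = x i := by
        rw [coord, dif_pos ⟨hm1, hm2⟩]
        exact congrArg x (Fin.ext (by simp only [Fin.val_mk]; omega))
      have hgoal : x i = y (m + 1) + (if m = j₀ then 0 else tchoice n j₀ y x m * y m)
          - (if m + 1 = j₀ then 0 else tchoice n j₀ y x (m + 1) * y (m + 1)) → x i =
          y ((i : ℕ) + 2) + (if (i : ℕ) + 1 = j₀ then 0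
            else tchoice n j₀ y x ((i : ℕ) + 1) * y ((i : ℕ) + 1))
          - (if (i : ℕ) + 2 = j₀ then 0
            else tchoice n j₀ y x ((i : ℕ) + 2) * y ((i : ℕ) + 2)) := by
        rw [show (i : ℕ) + 2 = m + 1 from by omega, ← hm_def]
        exact fun h => h
      apply hgoal
      rw [← hco]
      rcases lt_trichotomy m j₀ with hmj | hmj | hmj
      · rw [if_neg (by omega)]
        have hAm := hty1 m hm1 hmj
        have hSm := sum_Icc_peel_left (coord n x) m (j₀ - 1) (by omega)
        by_cases hmj' : m + 1 = j₀
        · rw [if_pos hmj']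
          have h1 : ∑ p ∈ Icc (m + 1) j₀, y p = y j₀ := by
            rw [hmj', Finset.Icc_self, Finset.sum_singleton]
          have h2 : ∑ p ∈ Icc m (j₀ - 1), coord n x p = coord n x m := by
            rw [show j₀ - 1 = m from by omega, Finset.Icc_self, Finset.sum_singleton]
          rw [hAm, h1, h2, show m + 1 = j₀ from hmj']
          ring
        · rw [if_neg hmj']
          have hAm1 := hty1 (m + 1) (by omega) (by omega)
          have hYpeel := sum_Icc_peel_left y (m + 1) j₀ (by omega)
          rw [hAm, hAm1]
          rw [hSm] at *
          linarith
      · rw [if_pos hmj, if_neg (by omega)]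
        have hA1 := hty2 (m + 1) (by omega) (by omega)
        have h1 : ∑ p ∈ Icc (j₀ + 1) (m + 1), y p = y (m + 1) := by
          rw [show j₀ + 1 = m + 1 from by omega, Finset.Icc_self, Finset.sum_singleton]
        have h2 : ∑ p ∈ Icc j₀ (m + 1 - 1), coord n x p = coord n x m := by
          rw [show m + 1 - 1 = m from rfl, ← hmj, Finset.Icc_self, Finset.sum_singleton]
        rw [hA1, h1, h2]
        ring
      · rw [if_neg (by omega), if_neg (by omega)]
        have hAm := hty2 m hmj (by omega)
        have hAm1 := hty2 (m + 1) (by omega) (by omega)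
        have hSpeel : ∑ p ∈ Icc j₀ (m + 1 - 1), coord n x p
            = (∑ p ∈ Icc j₀ (m - 1), coord n x p) + coord n x m := by
          have h := Finset.sum_Icc_succ_top (by omega : j₀ ≤ m - 1 + 1) (coord n x)
          rw [show m - 1 + 1 = m from by omega] at h
          rw [show m + 1 - 1 = m from rfl]
          exact h
        have hYpeel : ∑ p ∈ Icc (j₀ + 1) (m + 1), y p
            = (∑ p ∈ Icc (j₀ + 1) m, y p) + y (m + 1) :=
          Finset.sum_Icc_succ_top (by omega) y
        rw [hAm, hAm1, hSpeel, hYpeel]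
        ring
end

section
/- Fix 1 ≤ j_0 < k_0 ≤ n. Suppose x = (x_1, …, x_{n−1}) ∈ ℝ^{n−1} satisfies y_{j+1} + ⋯ + y_{k−1} ≤ x_j + ⋯ + x_{k−1} ≤ y_j + ⋯ + y_k for all 1 ≤ j < k ≤ n, together with the equality x_{j_0} + ⋯ + x_{k_0 − 1} = y_{j_0 + 1} + ⋯ + y_{k_0 − 1}. Then there exist t_1, …, t_n ∈ [0, 1] with t_{j_0} = 0 and t_{k_0} = 1 such that x = w + Σ_{m=1}^{n} t_m y_m v_m. -/
open Finset

/-- Fix `1 ≤ j_0 < k_0 ≤ n`.  If `x ∈ P` and moreover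
`x_{j_0} + ⋯ + x_{k_0−1} = y_{j_0+1} + ⋯ + y_{k_0−1}`, then there exist
`t_1, …, t_n ∈ [0,1]` with `t_{j_0} = 0` and `t_{k_0} = 1` such that
`x = w + Σ_{m=1}^{n} t_m y_m v_m`. -/
theorem statement17 (n : ℕ) (hn : 2 ≤ n) (y : ℕ → ℝ)
    (hy : ∀ m, 1 ≤ m → m ≤ n → 0 < y m)
    (j₀ k₀ : ℕ) (hj₀ : 1 ≤ j₀) (hjk : j₀ < k₀) (hk₀ : k₀ ≤ n)
    (x : Fin (n - 1) → ℝ)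
    (hP : x ∈ polyP n y)
    (hface : (∑ m ∈ Icc j₀ (k₀ - 1), coord n x m) = ∑ m ∈ Icc (j₀ + 1) (k₀ - 1), y m) :
    ∃ t : ℕ → ℝ, (∀ m, 0 ≤ t m ∧ t m ≤ 1) ∧ t j₀ = 0 ∧ t k₀ = 1 ∧
      x = wVec n y + ∑ m ∈ Icc 1 n, (t m * y m) • stdV n m := by
  have hIcc : ∀ a b : ℕ, 1 ≤ a → Icc a b = Ioc (a-1) b := by
    intro a b h; rw [← Finset.Icc_add_one_left_eq_Ioc]; congr 1; omega
  have hsingle : ∀ (f : ℕ → ℝ) (a : ℕ), 1 ≤ a → ∑ i ∈ Ioc (a-1) a, f i = f a := by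
    intro f a h
    rw [show Ioc (a-1) a = Icc a a by rw [← Finset.Icc_add_one_left_eq_Ioc]; congr 1; omega,
      Finset.Icc_self, Finset.sum_singleton]
  have hP' : ∀ j k : ℕ, 1 ≤ j → j < k → k ≤ n →
      (∑ i ∈ Ioc j (k-1), y i) ≤ (∑ i ∈ Ioc (j-1) (k-1), coord n x i) ∧
      (∑ i ∈ Ioc (j-1) (k-1), coord n x i) ≤ ∑ i ∈ Ioc (j-1) k, y i := by
    intro j k hj hjk' hkn
    have h := hP j k hj hjk' hkn
    rw [hIcc j (k-1) hj, hIcc (j+1) (k-1) (by omega), hIcc j k hj] at h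
    simpa using h
  have hface' : (∑ i ∈ Ioc (j₀-1) (k₀-1), coord n x i) = ∑ i ∈ Ioc j₀ (k₀-1), y i := by
    have h := hface
    rw [hIcc j₀ (k₀-1) hj₀, hIcc (j₀+1) (k₀-1) (by omega)] at h
    simpa using h
  set F : ℕ → ℝ := fun m => (∑ i ∈ Ioc 0 (m-1), coord n x i) - (∑ i ∈ Ioc 1 m, y i)
    with hFdef
  have hFd : ∀ a b : ℕ, 1 ≤ a → a ≤ b → F b - F a =
      (∑ i ∈ Ioc (a-1) (b-1), coord n x i) - (∑ i ∈ Ioc a b, y i) := by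
    intro a b ha hab
    have h1 := Finset.sum_Ioc_consecutive (fun i => coord n x i)
      (show (0:ℕ) ≤ a-1 by omega) (show a-1 ≤ b-1 by omega)
    have h2 := Finset.sum_Ioc_consecutive y (show (1:ℕ) ≤ a by omega) hab
    simp only [hFdef]
    linarith
  have hGk : F j₀ - F k₀ = y k₀ := by
    have hd := hFd j₀ k₀ hj₀ (le_of_lt hjk)
    have hsy := Finset.sum_Ioc_consecutive y (show j₀ ≤ k₀-1 by omega)
      (show k₀-1 ≤ k₀ by omega)
    have hs := hsingle y k₀ (by omega)
    linarith
  have hG : ∀ m, 1 ≤ m → m ≤ n → 0 ≤ F j₀ - F m ∧ F j₀ - F m ≤ y m := by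
    intro m h1 h2
    rcases lt_trichotomy m j₀ with hm | hm | hm
    · have hd := hFd m j₀ h1 (le_of_lt hm)
      constructor
      · have hl := (hP' m k₀ h1 (by omega) hk₀).1
        have hsx := Finset.sum_Ioc_consecutive (fun i => coord n x i)
          (show m-1 ≤ j₀-1 by omega) (show j₀-1 ≤ k₀-1 by omega)
        have hsy := Finset.sum_Ioc_consecutive y (show m ≤ j₀ by omega)
          (show j₀ ≤ k₀-1 by omega)
        linarith
      · have hu := (hP' m j₀ h1 hm (by omega)).2
        have hsy := Finset.sum_Ioc_consecutive y (show m-1 ≤ m by omega)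
          (show m ≤ j₀ by omega)
        have hs := hsingle y m h1
        linarith
    · rw [hm, sub_self]
      exact ⟨le_refl 0, (hy j₀ hj₀ (by omega)).le⟩
    · have hd := hFd j₀ m hj₀ (le_of_lt hm)
      constructor
      · rcases lt_trichotomy m k₀ with hmk | hmk | hmk
        · have hl := (hP' m k₀ h1 hmk hk₀).1
          have hsx := Finset.sum_Ioc_consecutive (fun i => coord n x i)
            (show j₀-1 ≤ m-1 by omega) (show m-1 ≤ k₀-1 by omega)
          have hsy := Finset.sum_Ioc_consecutive y (show j₀ ≤ m by omega)
            (show m ≤ k₀-1 by omega)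
          linarith
        · rw [hmk]
          linarith [hGk, hy k₀ (by omega) hk₀]
        · have hu := (hP' k₀ m (by omega) hmk h2).2
          have hsx := Finset.sum_Ioc_consecutive (fun i => coord n x i)
            (show j₀-1 ≤ k₀-1 by omega) (show k₀-1 ≤ m-1 by omega)
          have hsy := Finset.sum_Ioc_consecutive y (show j₀ ≤ k₀-1 by omega)
            (show k₀-1 ≤ m by omega)
          linarith
      · have hu := (hP' j₀ m hj₀ hm h2).1
        have hsy := Finset.sum_Ioc_consecutive y (show j₀ ≤ m-1 by omega)
          (show m-1 ≤ m by omega)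
        have hs := hsingle y m (by omega)
        linarith
  refine ⟨fun m => if h : 1 ≤ m ∧ m ≤ n then (F j₀ - F m) / y m else 0, ?_, ?_, ?_, ?_⟩
  · intro m
    show 0 ≤ (if h : 1 ≤ m ∧ m ≤ n then (F j₀ - F m) / y m else 0) ∧
      (if h : 1 ≤ m ∧ m ≤ n then (F j₀ - F m) / y m else 0) ≤ 1
    by_cases h : 1 ≤ m ∧ m ≤ n
    · rw [dif_pos h]
      have hym := hy m h.1 h.2
      have hGm := hG m h.1 h.2
      exact ⟨div_nonneg hGm.1 hym.le, (div_le_one hym).2 hGm.2⟩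
    · rw [dif_neg h]
      exact ⟨le_refl 0, zero_le_one⟩
  · show (if h : 1 ≤ j₀ ∧ j₀ ≤ n then (F j₀ - F j₀) / y j₀ else 0) = 0
    rw [dif_pos ⟨hj₀, by omega⟩, sub_self, zero_div]
  · show (if h : 1 ≤ k₀ ∧ k₀ ≤ n then (F j₀ - F k₀) / y k₀ else 0) = 1
    rw [dif_pos ⟨by omega, hk₀⟩, hGk, div_self (hy k₀ (by omega) hk₀).ne']
  · have hty : ∀ m, 1 ≤ m → m ≤ n →
        (if h : 1 ≤ m ∧ m ≤ n then (F j₀ - F m) / y m else 0) * y m = F j₀ - F m := by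
      intro m h1 h2
      rw [dif_pos ⟨h1, h2⟩, div_mul_cancel₀ _ (hy m h1 h2).ne']
    have key : ∀ a : ℕ, a ∈ Icc 1 n →
        (∑ m ∈ Icc 1 n, (if h : 1 ≤ m ∧ m ≤ n then (F j₀ - F m) / y m else 0) * y m *
          (if a = m then (1:ℝ) else 0)) = F j₀ - F a := by
      intro a ha
      simp only [mul_ite, mul_one, mul_zero, Finset.sum_ite_eq, if_pos ha]
      exact hty a (mem_Icc.mp ha).1 (mem_Icc.mp ha).2
    funext i
    have hi : (i : ℕ) < n - 1 := i.isLt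
    simp only [Pi.add_apply, Finset.sum_apply, Pi.smul_apply, smul_eq_mul, wVec, stdV,
      mul_sub, Finset.sum_sub_distrib]
    rw [key ((i:ℕ)+1) (by rw [mem_Icc]; omega), key ((i:ℕ)+2) (by rw [mem_Icc]; omega)]
    have hd := hFd ((i:ℕ)+1) ((i:ℕ)+2) (by omega) (by omega)
    have hx : (∑ j ∈ Ioc ((i:ℕ)+1-1) ((i:ℕ)+2-1), coord n x j) = x i := by
      rw [show (i:ℕ)+2-1 = (i:ℕ)+1 from rfl]
      rw [hsingle (coord n x) ((i:ℕ)+1) (by omega)]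
      simp only [coord]
      rw [dif_pos ⟨by omega, by omega⟩]
      exact congrArg x (Fin.ext rfl)
    have hy2 : (∑ j ∈ Ioc ((i:ℕ)+1) ((i:ℕ)+2), y j) = y ((i:ℕ)+2) := by
      have := hsingle y ((i:ℕ)+2) (by omega)
      rwa [show (i:ℕ)+2-1 = (i:ℕ)+1 from rfl] at this
    rw [hy2] at hd
    rw [hx] at hd
    linarith
end

section
/- Let n ≥ 1, α = (α_1, …, α_{n+1}) ∈ ℝ^{n+1} with α_1 ≥ … ≥ α_{n+1}, β = (β_1, …, β_n) ∈ ℝ^n with β_1 ≥ … ≥ β_n, and suppose t ∈ ℝ satisfies the interlacing condition. Set s̄_− = max{ α_k + β_l : 1 ≤ k ≤ n+1, 1 ≤ l ≤ n, k + l ≥ n + 2 } and s̲_+ = min{ α_k + β_l : 1 ≤ k ≤ n+1, 1 ≤ l ≤ n, k + l ≤ n + 1 }. Then for every pair (k, l) with k + l ≤ n + 1 one has 1 + |t + α_k + β_l| ≤ 1 + (α_k + β_l − s̄_−), and for every pair (k, l) with k + l ≥ n + 2 one has 1 + |t + α_k + β_l| ≤ 1 + (s̲_+ − α_k − β_l);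 consequently Π_{l=1}^{n} Π_{k=1}^{n+1} (1 + |t + α_k + β_l|)^{−1/2} ≥ Π_{k+l ≤ n+1} (1 + α_k + β_l − s̄_−)^{−1/2} · Π_{k+l ≥ n+2} (1 + s̲_+ − α_k − β_l)^{−1/2}. -/
/-!
Monotonicity of `α` turns the interlacing condition into a sign pattern: `t + α k + β l ≥ 0`
whenever `k + l ≤ n + 1` and `t + α k + β l ≤ 0` whenever `k + l ≥ n + 2`. Since `s̄₋` and `s̲₊`
are attained, `t + s̄₋ ≤ 0 ≤ t + s̲₊`, so on the first region
`|t + α k + β l| = t + α k + β l ≤ α k + β l - s̄₋`, and symmetrically on the second. The product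
inequality follows because `x ↦ x ^ (-1/2)` is antitone on `(0, ∞)`.
-/

open Finset

theorem Finset.prod_rpow_le_prod_rpow_of_nonpos {ι : Type*} {s : Finset ι} {f g : ι → ℝ} {r : ℝ}
    (hf : ∀ i ∈ s, 0 < f i) (hfg : ∀ i ∈ s, f i ≤ g i) (hr : r ≤ 0) :
    ∏ i ∈ s, g i ^ r ≤ ∏ i ∈ s, f i ^ r :=
  prod_le_prod (fun i hi => Real.rpow_nonneg ((hf i hi).le.trans (hfg i hi)) r)
    fun i hi => Real.rpow_le_rpow_of_nonpos (hf i hi) (hfg i hi) hr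

theorem Finset.prod_filter_rpow_mul_prod_filter_rpow_le {ι : Type*} {s : Finset ι}
    {P Q : ι → Prop} [DecidablePred P] [DecidablePred Q] (hQ : ∀ i ∈ s, Q i ↔ ¬P i)
    {f g h : ι → ℝ} {r : ℝ} (hr : r ≤ 0) (hh : ∀ i ∈ s, 0 < h i)
    (hf : ∀ i ∈ s, P i → h i ≤ f i) (hg : ∀ i ∈ s, Q i → h i ≤ g i) :
    (∏ i ∈ s with P i, f i ^ r) * ∏ i ∈ s with Q i, g i ^ r ≤ ∏ i ∈ s, h i ^ r := by
  rw [filter_congr hQ, ← prod_apply_ite (h := (· ^ r))]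
  refine prod_rpow_le_prod_rpow_of_nonpos hh (fun i hi => ?_) hr
  split_ifs with hP
  · exact hf i hi hP
  · exact hg i hi ((hQ i hi).2 hP)

section Interlacing

variable {n : ℕ} {α β : ℕ → ℝ} {t : ℝ} {k l : ℕ}

theorem interlacing_add_nonneg (hα : AntitoneOn α (Set.Icc 1 (n + 1)))
    (ht : ∀ j, 1 ≤ j → j ≤ n → -α (n + 1 - j) ≤ β j + t)
    (hk : 1 ≤ k) (hl : 1 ≤ l) (hkl : k + l ≤ n + 1) : 0 ≤ t + α k + β l := by
  have hαk : α (n + 1 - l) ≤ α k := hα ⟨hk, by omega⟩ ⟨by omega, by omega⟩ (by omega)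
  linarith [ht l hl (by omega)]

theorem interlacing_add_nonpos (hα : AntitoneOn α (Set.Icc 1 (n + 1)))
    (ht : ∀ j, 1 ≤ j → j ≤ n → β j + t ≤ -α (n + 2 - j))
    (hk : k ≤ n + 1) (hl : l ≤ n) (hkl : n + 2 ≤ k + l) : t + α k + β l ≤ 0 := by
  have hαk : α k ≤ α (n + 2 - l) := hα ⟨by omega, by omega⟩ ⟨by omega, hk⟩ (by omega)
  linarith [ht l (by omega) hl]

end Interlacing

theorem statement18_general (n : ℕ) (α β : ℕ → ℝ)
    (hα : ∀ k, 1 ≤ k → k ≤ n → α (k + 1) ≤ α k)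
    (t : ℝ)
    (ht : ∀ j, 1 ≤ j → j ≤ n →
      β j + t ≤ -α (n + 2 - j) ∧ -α (n + 1 - j) ≤ β j + t)
    (sbar splus : ℝ)
    (hsbar : IsGreatest
      { a | ∃ k l : ℕ, 1 ≤ k ∧ k ≤ n + 1 ∧ 1 ≤ l ∧ l ≤ n ∧ n + 2 ≤ k + l ∧
        a = α k + β l } sbar)
    (hsplus : IsLeast
      { a | ∃ k l : ℕ, 1 ≤ k ∧ k ≤ n + 1 ∧ 1 ≤ l ∧ l ≤ n ∧ k + l ≤ n + 1 ∧
        a = α k + β l } splus) :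
    (∀ k l : ℕ, 1 ≤ k → k ≤ n + 1 → 1 ≤ l → l ≤ n → k + l ≤ n + 1 →
        1 + |t + α k + β l| ≤ 1 + (α k + β l - sbar)) ∧
    (∀ k l : ℕ, 1 ≤ k → k ≤ n + 1 → 1 ≤ l → l ≤ n → n + 2 ≤ k + l →
        1 + |t + α k + β l| ≤ 1 + (splus - α k - β l)) ∧
    (∏ p ∈ (Icc 1 (n + 1) ×ˢ Icc 1 n).filter (fun p => p.1 + p.2 ≤ n + 1),
        (1 + α p.1 + β p.2 - sbar) ^ (-(1 : ℝ) / 2)) *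
      (∏ p ∈ (Icc 1 (n + 1) ×ˢ Icc 1 n).filter (fun p => n + 2 ≤ p.1 + p.2),
        (1 + splus - α p.1 - β p.2) ^ (-(1 : ℝ) / 2)) ≤
      ∏ l ∈ Icc 1 n, ∏ k ∈ Icc 1 (n + 1), (1 + |t + α k + β l|) ^ (-(1 : ℝ) / 2) := by
  have hanti : AntitoneOn α (Set.Icc 1 (n + 1)) :=
    antitoneOn_of_add_one_le Set.ordConnected_Icc fun k _ hk hk1 =>
      hα k hk.1 (by simp only [Set.mem_Icc] at hk1; omega)
  have hup := fun j hj hj' => (ht j hj hj').1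
  have hdown := fun j hj hj' => (ht j hj hj').2
  obtain ⟨k₀, l₀, -, hk₀, -, hl₀, hkl₀, hsbar₀⟩ := hsbar.1
  obtain ⟨k₁, l₁, hk₁, -, hl₁, -, hkl₁, hsplus₁⟩ := hsplus.1
  have hlow : ∀ k l : ℕ, 1 ≤ k → k ≤ n + 1 → 1 ≤ l → l ≤ n → k + l ≤ n + 1 →
      1 + |t + α k + β l| ≤ 1 + (α k + β l - sbar) := fun k l hk _ hl _ hkl => by
    rw [abs_of_nonneg (interlacing_add_nonneg hanti hdown hk hl hkl)]
    linarith [interlacing_add_nonpos hanti hup hk₀ hl₀ hkl₀]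
  have hhigh : ∀ k l : ℕ, 1 ≤ k → k ≤ n + 1 → 1 ≤ l → l ≤ n → n + 2 ≤ k + l →
      1 + |t + α k + β l| ≤ 1 + (splus - α k - β l) := fun k l _ hk _ hl hkl => by
    rw [abs_of_nonpos (interlacing_add_nonpos hanti hup hk hl hkl)]
    linarith [interlacing_add_nonneg hanti hdown hk₁ hl₁ hkl₁]
  refine ⟨hlow, hhigh, ?_⟩
  rw [← prod_product_right']
  refine prod_filter_rpow_mul_prod_filter_rpow_le (fun _ _ => by omega) (by norm_num)
    (fun _ _ => by positivity) (fun p hp hkl => ?_) (fun p hp hkl => ?_) <;>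
  simp only [mem_product, mem_Icc] at hp
  · linarith [hlow p.1 p.2 hp.1.1 hp.1.2 hp.2.1 hp.2.2 hkl]
  · linarith [hhigh p.1 p.2 hp.1.1 hp.1.2 hp.2.1 hp.2.2 hkl]

/-- Let `n ≥ 1`, `α_1 ≥ … ≥ α_{n+1}`, `β_1 ≥ … ≥ β_n`, and suppose `t` satisfies the
interlacing condition `−α_{n+2−j} ≥ β_j + t ≥ −α_{n+1−j}` for `1 ≤ j ≤ n`.  Let
`s̄₋` be the maximum of `α_k + β_l` over pairs with `k + l ≥ n + 2`, and `s̲₊` the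
minimum of `α_k + β_l` over pairs with `k + l ≤ n + 1`.  Then for each pair `(k, l)`
with `k + l ≤ n + 1` one has `1 + |t + α_k + β_l| ≤ 1 + (α_k + β_l − s̄₋)`, for each
pair with `k + l ≥ n + 2` one has `1 + |t + α_k + β_l| ≤ 1 + (s̲₊ − α_k − β_l)`, and
consequently `Π_{l=1}^{n} Π_{k=1}^{n+1} (1 + |t + α_k + β_l|)^{−1/2}
  ≥ Π_{k+l ≤ n+1} (1 + α_k + β_l − s̄₋)^{−1/2} · Π_{k+l ≥ n+2} (1 + s̲₊ − α_k − β_l)^{−1/2}`. -/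
theorem statement18 (n : ℕ) (hn : 1 ≤ n) (α β : ℕ → ℝ)
    (hα : ∀ k, 1 ≤ k → k ≤ n → α (k + 1) ≤ α k)
    (hβ : ∀ k, 1 ≤ k → k + 1 ≤ n → β (k + 1) ≤ β k)
    (t : ℝ)
    (ht : ∀ j, 1 ≤ j → j ≤ n →
      β j + t ≤ -α (n + 2 - j) ∧ -α (n + 1 - j) ≤ β j + t)
    (sbar splus : ℝ)
    (hsbar : IsGreatest
      { a | ∃ k l : ℕ, 1 ≤ k ∧ k ≤ n + 1 ∧ 1 ≤ l ∧ l ≤ n ∧ n + 2 ≤ k + l ∧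
        a = α k + β l } sbar)
    (hsplus : IsLeast
      { a | ∃ k l : ℕ, 1 ≤ k ∧ k ≤ n + 1 ∧ 1 ≤ l ∧ l ≤ n ∧ k + l ≤ n + 1 ∧
        a = α k + β l } splus) :
    (∀ k l : ℕ, 1 ≤ k → k ≤ n + 1 → 1 ≤ l → l ≤ n → k + l ≤ n + 1 →
        1 + |t + α k + β l| ≤ 1 + (α k + β l - sbar)) ∧
    (∀ k l : ℕ, 1 ≤ k → k ≤ n + 1 → 1 ≤ l → l ≤ n → n + 2 ≤ k + l →
        1 + |t + α k + β l| ≤ 1 + (splus - α k - β l)) ∧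
    (∏ p ∈ (Icc 1 (n + 1) ×ˢ Icc 1 n).filter (fun p => p.1 + p.2 ≤ n + 1),
        (1 + α p.1 + β p.2 - sbar) ^ (-(1 : ℝ) / 2)) *
      (∏ p ∈ (Icc 1 (n + 1) ×ˢ Icc 1 n).filter (fun p => n + 2 ≤ p.1 + p.2),
        (1 + splus - α p.1 - β p.2) ^ (-(1 : ℝ) / 2)) ≤
      ∏ l ∈ Icc 1 n, ∏ k ∈ Icc 1 (n + 1), (1 + |t + α k + β l|) ^ (-(1 : ℝ) / 2) :=
  statement18_general n α β hα t ht sbar splus hsbar hsplus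
end
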